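/- arXiv:2602.01478 — 11 statements merged into one kernel-verified Lean document; each statement's English description precedes it below -/
import Mathlib

section
/- Let U be a non-principal ultrafilter on ℕ and let h₀, h₁ : ℕ → ℕ be non-decreasing and unbounded. Assume that for every sequence ⟨P_n : n ∈ ℕ⟩ of partitions of ℕ into finitely many sets there exists x ∈ U such that for every n, x has non-empty intersection with at most h₀(n)+1 elements of P_n. Then for every such sequence ⟨P_n : n ∈ ℕ⟩ there exists y ∈ U such that for every n, y has non-empty intersection with at most h₁(n)+1 elements of P_n. -/
/-- A partition of a set `S` into finitely many (nonempty, pairwise disjoint) pieces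
covering everything. -/
def IsFinPartition {S : Type*} (P : Set (Set S)) : Prop :=
  P.Finite ∧ ∅ ∉ P ∧ ⋃₀ P = Set.univ ∧ P.Pairwise Disjoint

/-- The common refinement of two partitions. -/
def meetP (P Q : Set (Set ℕ)) : Set (Set ℕ) :=
  {r | r.Nonempty ∧ ∃ p ∈ P, ∃ q ∈ Q, r = p ∩ q}

lemma isFinPartition_meetP {P Q : Set (Set ℕ)} (hP : IsFinPartition P)
    (hQ : IsFinPartition Q) : IsFinPartition (meetP P Q) := by
  obtain ⟨hPf, _, hPu, hPd⟩ := hP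
  obtain ⟨hQf, _, hQu, hQd⟩ := hQ
  refine ⟨?_, ?_, ?_, ?_⟩
  · apply Set.Finite.subset ((hPf.prod hQf).image (fun pq => pq.1 ∩ pq.2))
    rintro r ⟨-, p, hp, q, hq, rfl⟩
    exact ⟨(p, q), ⟨hp, hq⟩, rfl⟩
  · rintro ⟨h, -⟩
    exact h.ne_empty rfl
  · ext t
    simp only [Set.mem_univ, iff_true, Set.mem_sUnion]
    have hp : t ∈ ⋃₀ P := by rw [hPu]; trivial
    have hq : t ∈ ⋃₀ Q := by rw [hQu]; trivial
    obtain ⟨p, hp, htp⟩ := hp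
    obtain ⟨q, hq, htq⟩ := hq
    exact ⟨p ∩ q, ⟨⟨t, htp, htq⟩, p, hp, q, hq, rfl⟩, htp, htq⟩
  · rintro r₁ ⟨-, p₁, hp₁, q₁, hq₁, rfl⟩ r₂ ⟨-, p₂, hp₂, q₂, hq₂, rfl⟩ hne
    rw [Set.disjoint_left]
    intro t ht₁ ht₂
    have hpp : p₁ = p₂ := by
      by_contra h
      exact Set.disjoint_left.mp (hPd hp₁ hp₂ h) ht₁.1 ht₂.1
    have hqq : q₁ = q₂ := by
      by_contra h
      exact Set.disjoint_left.mp (hQd hq₁ hq₂ h) ht₁.2 ht₂.2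
    exact hne (by rw [hpp, hqq])

lemma meetP_refines_left {P Q : Set (Set ℕ)} :
    ∀ r ∈ meetP P Q, ∃ p ∈ P, r ⊆ p := by
  rintro r ⟨-, p, hp, q, hq, rfl⟩
  exact ⟨p, hp, Set.inter_subset_left⟩

lemma meetP_refines_right {P Q : Set (Set ℕ)} :
    ∀ r ∈ meetP P Q, ∃ q ∈ Q, r ⊆ q := by
  rintro r ⟨-, p, hp, q, hq, rfl⟩
  exact ⟨q, hq, Set.inter_subset_right⟩

/-- Join of `P 0, ..., P (k-1)`. -/
def joinUpTo (P : ℕ → Set (Set ℕ)) : ℕ → Set (Set ℕ)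
  | 0 => {Set.univ}
  | (k + 1) => meetP (joinUpTo P k) (P k)

lemma isFinPartition_joinUpTo (P : ℕ → Set (Set ℕ)) (hP : ∀ n, IsFinPartition (P n)) :
    ∀ k, IsFinPartition (joinUpTo P k)
  | 0 => ⟨Set.finite_singleton _,
      fun h => Set.empty_ne_univ (Set.mem_singleton_iff.mp h),
      Set.sUnion_singleton _, Set.pairwise_singleton _ _⟩
  | (k + 1) => isFinPartition_meetP (isFinPartition_joinUpTo P hP k) (hP k)

lemma joinUpTo_refines (P : ℕ → Set (Set ℕ)) :
    ∀ k n, n < k → ∀ r ∈ joinUpTo P k, ∃ p ∈ P n, r ⊆ p := by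
  intro k
  induction k with
  | zero => intro n hn; omega
  | succ k ih =>
    intro n hn r hr
    rcases Nat.lt_succ_iff_lt_or_eq.mp hn with h | rfl
    · obtain ⟨r', hr', hsub⟩ := meetP_refines_left r hr
      obtain ⟨p, hp, hsub'⟩ := ih n h r' hr'
      exact ⟨p, hp, hsub.trans hsub'⟩
    · exact meetP_refines_right r hr

/-- Counting lemma: if `R` refines `P`, then `x` meets at most as many pieces of `P`
as of `R`. -/
lemma meets_le_of_refines {P R : Set (Set ℕ)} (hP : IsFinPartition P)
    (hR : IsFinPartition R) (href : ∀ r ∈ R, ∃ p ∈ P, r ⊆ p) (x : Set ℕ) :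
    {p ∈ P | (x ∩ p).Nonempty}.ncard ≤ {r ∈ R | (x ∩ r).Nonempty}.ncard := by
  classical
  have hRu := hR.2.2.1
  have hPd := hP.2.2.2
  -- for each p choose a point in x ∩ p, then the piece of R containing it
  have key : ∀ p : Set ℕ, ∃ r : Set ℕ, p ∈ {p ∈ P | (x ∩ p).Nonempty} →
      r ∈ R ∧ (x ∩ r).Nonempty ∧ (p ∩ r).Nonempty := by
    intro p
    by_cases hp : p ∈ {p ∈ P | (x ∩ p).Nonempty}
    · obtain ⟨hpP, t, htx, htp⟩ := hp
      have : t ∈ ⋃₀ R := by rw [hRu]; trivial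
      obtain ⟨r, hrR, htr⟩ := this
      exact ⟨r, fun _ => ⟨hrR, ⟨t, htx, htr⟩, ⟨t, htp, htr⟩⟩⟩
    · exact ⟨∅, fun h => absurd h hp⟩
  choose f hf using key
  refine Set.ncard_le_ncard_of_injOn f ?_ ?_ (hR.1.subset (Set.sep_subset _ _))
  · intro p hp; exact ⟨(hf p hp).1, (hf p hp).2.1⟩
  · intro p₁ hp₁ p₂ hp₂ heq
    obtain ⟨q, hq, hsub⟩ := href (f p₂) (hf p₂ hp₂).1
    obtain ⟨t₁, ht₁p, ht₁r⟩ := (hf p₁ hp₁).2.2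
    obtain ⟨t₂, ht₂p, ht₂r⟩ := (hf p₂ hp₂).2.2
    rw [heq] at ht₁r
    have h₁ : p₁ = q := by
      by_contra h
      exact Set.disjoint_left.mp (hPd hp₁.1 hq h) ht₁p (hsub ht₁r)
    have h₂ : p₂ = q := by
      by_contra h
      exact Set.disjoint_left.mp (hPd hp₂.1 hq h) ht₂p (hsub ht₂r)
    rw [h₁, h₂]

lemma exists_mem_ultrafilter {P : Set (Set ℕ)} (U : Ultrafilter ℕ)
    (hP : IsFinPartition P) : ∃ p ∈ P, p ∈ U := by
  have : ⋃₀ P ∈ U := by rw [hP.2.2.1]; exact Filter.univ_mem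
  exact (Ultrafilter.finite_sUnion_mem_iff hP.1).mp this

theorem stmt_0 (U : Ultrafilter ℕ) (hU : Filter.cofinite ≤ (U : Filter ℕ))
    (h₀ h₁ : ℕ → ℕ)
    (hmono₀ : Monotone h₀) (hunb₀ : ∀ m : ℕ, ∃ n, m ≤ h₀ n)
    (hmono₁ : Monotone h₁) (hunb₁ : ∀ m : ℕ, ∃ n, m ≤ h₁ n)
    (hyp : ∀ P : ℕ → Set (Set ℕ), (∀ n, IsFinPartition (P n)) →
      ∃ x ∈ U, ∀ n, {p ∈ P n | (x ∩ p).Nonempty}.ncard ≤ h₀ n + 1) :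
    ∀ P : ℕ → Set (Set ℕ), (∀ n, IsFinPartition (P n)) →
      ∃ y ∈ U, ∀ n, {p ∈ P n | (y ∩ p).Nonempty}.ncard ≤ h₁ n + 1 := by
  classical
  intro P hPart
  -- threshold n₀ with h₀ 0 ≤ h₁ n for all n ≥ n₀
  obtain ⟨n₀, hn₀⟩ := hunb₁ (h₀ 0)
  -- g n : greatest m ≤ n with h₀ m ≤ h₁ n
  set g : ℕ → ℕ := fun n => Nat.findGreatest (fun m => h₀ m ≤ h₁ n) n with hg
  have hg_spec : ∀ n, n₀ ≤ n → h₀ (g n) ≤ h₁ n := by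
    intro n hn
    simp only [hg]
    exact Nat.findGreatest_spec (P := fun m => h₀ m ≤ h₁ n) (m := 0) (Nat.zero_le n) (le_trans hn₀ (hmono₁ hn))
  have hg_mono : Monotone g := by
    intro a b hab
    exact Nat.findGreatest_mono (fun m hm => hm.trans (hmono₁ hab)) hab
  have hg_unb : ∀ m, ∃ n, m < g n := by
    intro m
    obtain ⟨n', hn'⟩ := hunb₁ (h₀ (m + 1))
    refine ⟨max (m + 1) n', lt_of_lt_of_le (Nat.lt_succ_self m) ?_⟩
    exact Nat.le_findGreatest (le_max_left _ _) (hn'.trans (hmono₁ (le_max_right _ _)))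
  -- B m : least n with m < g n
  set B : ℕ → ℕ := fun m => Nat.find (hg_unb m) with hB
  have hB_spec : ∀ m, m < g (B m) := fun m => Nat.find_spec (hg_unb m)
  have hn_lt_B : ∀ n, n < B (g n) := by
    intro n
    by_contra h
    push_neg at h
    exact absurd (hg_mono h) (Nat.not_le.mpr (hB_spec (g n)))
  -- the auxiliary partition sequence
  set Q : ℕ → Set (Set ℕ) := fun m => joinUpTo P (B m) with hQ
  have hQPart : ∀ m, IsFinPartition (Q m) := fun m => isFinPartition_joinUpTo P hPart _
  obtain ⟨x, hxU, hx⟩ := hyp Q hQPart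
  -- pieces of P n in U for n < n₀
  choose piece hpieceP hpieceU using fun n => exists_mem_ultrafilter U (hPart n)
  set y : Set ℕ := x ∩ ⋂ n ∈ Finset.range n₀, piece n with hy
  have hyU : y ∈ U := by
    apply Filter.inter_mem hxU
    exact (Filter.biInter_finset_mem _).mpr fun n _ => hpieceU n
  refine ⟨y, hyU, fun n => ?_⟩
  rcases lt_or_ge n n₀ with hn | hn
  · -- small n: y is contained in piece n, so it meets only that piece
    have hsub : {p ∈ P n | (y ∩ p).Nonempty} ⊆ {piece n} := by
      rintro p ⟨hpP, t, hty, htp⟩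
      have htpiece : t ∈ piece n := by
        have := hty.2
        simp only [Set.mem_iInter] at this
        exact this n (Finset.mem_range.mpr hn)
      by_contra h
      exact Set.disjoint_left.mp
        ((hPart n).2.2.2 hpP (hpieceP n) (by simpa using h)) htp htpiece
    calc {p ∈ P n | (y ∩ p).Nonempty}.ncard ≤ ({piece n} : Set (Set ℕ)).ncard :=
          Set.ncard_le_ncard hsub (Set.finite_singleton _)
      _ = 1 := Set.ncard_singleton _
      _ ≤ h₁ n + 1 := by omega
  · -- large n: use the refinement Q (g n)
    have hsub : {p ∈ P n | (y ∩ p).Nonempty} ⊆ {p ∈ P n | (x ∩ p).Nonempty} := by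
      rintro p ⟨hpP, t, hty, htp⟩
      exact ⟨hpP, t, hty.1, htp⟩
    have h1 : {p ∈ P n | (y ∩ p).Nonempty}.ncard ≤ {p ∈ P n | (x ∩ p).Nonempty}.ncard :=
      Set.ncard_le_ncard hsub ((hPart n).1.subset (Set.sep_subset _ _))
    have h2 : {p ∈ P n | (x ∩ p).Nonempty}.ncard ≤
        {r ∈ Q (g n) | (x ∩ r).Nonempty}.ncard :=
      meets_le_of_refines (hPart n) (hQPart (g n))
        (joinUpTo_refines P (B (g n)) n (hn_lt_B n)) x
    have h3 := hx (g n)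
    have h4 : h₀ (g n) + 1 ≤ h₁ n + 1 := by
      have := hg_spec n hn; omega
    omega
end

section
/- A non-principal ultrafilter U on ℕ is a Laver ultrafilter if and only if for every function F : ℕ → 2^ω and every non-decreasing unbounded f : ℕ → ℕ there exists x ∈ U such that level_{F[x]}(n) ≤ f(n)+1 for every n ∈ ℕ. -/
/-- A Laver ultrafilter: a non-principal ultrafilter such that for every sequence of
finite partitions there is a member meeting at most `n+1` pieces of the `n`-th partition. -/
def IsLaverUltrafilter {S : Type*} (U : Ultrafilter S) : Prop :=
  Filter.cofinite ≤ (U : Filter S) ∧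
  ∀ P : ℕ → Set (Set S), (∀ n, IsFinPartition (P n)) →
    ∃ x ∈ U, ∀ n, {p ∈ P n | (x ∩ p).Nonempty}.ncard ≤ n + 1

/-- `level A n` is the number of distinct restrictions to `n` of elements of `A ⊆ 2^ω`. -/
noncomputable def level (A : Set (ℕ → Bool)) (n : ℕ) : ℕ :=
  ((fun x : ℕ → Bool => (fun i : Fin n => x i)) '' A).ncard

lemma level_eq (F : ℕ → ℕ → Bool) (x : Set ℕ) (k : ℕ) :
    level (F '' x) k = ((fun m => fun i : Fin k => F m i) '' x).ncard := by
  unfold level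
  rw [← Set.image_comp]
  rfl

lemma level_le_level (A : Set (ℕ → Bool)) {k K : ℕ} (h : k ≤ K) :
    level A k ≤ level A K := by
  unfold level
  have heq : (fun x : ℕ → Bool => fun i : Fin k => x i) =
      (fun g : Fin K → Bool => fun i : Fin k => g ⟨i, lt_of_lt_of_le i.2 h⟩) ∘
        (fun x : ℕ → Bool => fun i : Fin K => x i) := rfl
  rw [heq, Set.image_comp]
  exact Set.ncard_image_le (Set.toFinite _)

theorem stmt_1 (U : Ultrafilter ℕ) (hU : Filter.cofinite ≤ (U : Filter ℕ)) :
    IsLaverUltrafilter U ↔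
      ∀ (F : ℕ → (ℕ → Bool)) (f : ℕ → ℕ), Monotone f → (∀ m : ℕ, ∃ n, m ≤ f n) →
        ∃ x ∈ U, ∀ n, level (F '' x) n ≤ f n + 1 := by
  constructor
  · rintro ⟨-, hL⟩ F f hf hub
    -- h n = largest k with f k ≤ n
    set h : ℕ → ℕ := fun n => Nat.findGreatest (fun k => f k ≤ n) (Classical.choose (hub (n+1)))
      with hh
    have hkh : ∀ k, k ≤ h (f k) := by
      intro k
      apply Nat.le_findGreatest
      · by_contra hc
        push_neg at hc
        have h1 : f (Classical.choose (hub (f k + 1))) ≤ f k := hf hc.le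
        have h2 := Classical.choose_spec (hub (f k + 1))
        omega
      · exact le_rfl
    -- the equivalence classes at resolution h n
    set cls : ℕ → ℕ → Set ℕ :=
      fun n m => {m' | (fun i : Fin (h n) => F m' i) = (fun i : Fin (h n) => F m i)} with hcls
    have hmemcls : ∀ n m, m ∈ cls n m := fun n m => rfl
    set P : ℕ → Set (Set ℕ) := fun n => Set.range (cls n) with hPdef
    have hP : ∀ n, IsFinPartition (P n) := by
      intro n
      refine ⟨?_, ?_, ?_, ?_⟩
      · have hsub : P n ⊆ Set.range
            (fun s : Fin (h n) → Bool => {m' | (fun i : Fin (h n) => F m' i) = s}) := by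
          rintro p ⟨m, rfl⟩
          exact ⟨_, rfl⟩
        exact (Set.finite_range _).subset hsub
      · rintro ⟨m, hm⟩
        have := hmemcls n m
        rw [hm] at this
        exact this
      · ext m
        simp only [Set.mem_sUnion, Set.mem_univ, iff_true]
        exact ⟨cls n m, ⟨m, rfl⟩, hmemcls n m⟩
      · rintro p ⟨a, rfl⟩ q ⟨b, rfl⟩ hne
        rw [Set.disjoint_left]
        intro m' hma hmb
        apply hne
        have ha : (fun i : Fin (h n) => F m' i) = (fun i : Fin (h n) => F a i) := hma
        have hb : (fun i : Fin (h n) => F m' i) = (fun i : Fin (h n) => F b i) := hmb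
        have hab : (fun i : Fin (h n) => F a i) = (fun i : Fin (h n) => F b i) :=
          ha ▸ hb
        ext m''
        simp only [hcls, Set.mem_setOf_eq, hab]
    obtain ⟨x, hx, hmeet⟩ := hL P hP
    refine ⟨x, hx, ?_⟩
    intro k
    have key : level (F '' x) (h (f k)) ≤ f k + 1 := by
      rw [level_eq]
      set n := f k with hn
      refine le_trans (Set.ncard_le_ncard_of_injOn
        (fun v => {m' | (fun i : Fin (h n) => F m' i) = v}) ?_ ?_ ?_) (hmeet n)
      · rintro v ⟨m, hm, rfl⟩
        exact ⟨⟨m, rfl⟩, ⟨m, ⟨hm, rfl⟩⟩⟩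
      · rintro v ⟨a, ha, rfl⟩ v' ⟨b, hb, rfl⟩ heq
        have hset : ({m' | (fun i : Fin (h n) => F m' i) = (fun i : Fin (h n) => F a i)} : Set ℕ)
            = {m' | (fun i : Fin (h n) => F m' i) = (fun i : Fin (h n) => F b i)} := heq
        have hmem : a ∈ {m' | (fun i : Fin (h n) => F m' i) = (fun i : Fin (h n) => F a i)} :=
          rfl
        rw [hset] at hmem
        exact hmem
      · exact (hP n).1.subset (Set.sep_subset _ _)
    exact le_trans (level_le_level _ (hkh k)) key
  · intro hprop
    refine ⟨hU, ?_⟩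
    intro P hP
    classical
    have hfin : ∀ n, (P n).Finite := fun n => (hP n).1
    have hcov : ∀ (n m : ℕ), ∃ p, p ∈ P n ∧ m ∈ p := by
      intro n m
      have h1 := (hP n).2.2.1
      have h2 : m ∈ ⋃₀ P n := by rw [h1]; trivial
      simpa [Set.mem_sUnion] using h2
    choose pc hpc1 hpc2 using hcov
    have huniq : ∀ n (p : Set ℕ), p ∈ P n → ∀ m ∈ p, pc n m = p := by
      intro n p hp m hm
      by_contra hne'
      have hd := (hP n).2.2.2 (hpc1 n m) hp hne'
      exact (Set.disjoint_left.mp hd (hpc2 n m)) hm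
    set k : ℕ → ℕ := fun n => Nat.card (P n) with hk
    have hk1 : ∀ n, 1 ≤ k n := by
      intro n
      have hF : Finite (P n) := (hfin n).to_subtype
      have hN : Nonempty (P n) := ⟨⟨pc n 0, hpc1 n 0⟩⟩
      exact Nat.card_pos
    have hexen : ∀ n, ∃ e : (P n) → Fin (k n), Function.Injective e := by
      intro n
      have hF : Finite (P n) := (hfin n).to_subtype
      exact ⟨Finite.equivFin (P n), (Finite.equivFin (P n)).injective⟩
    choose en hen using hexen
    set ind : ℕ → ℕ → ℕ := fun n m => (en n ⟨pc n m, hpc1 n m⟩ : Fin (k n)).val with hind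
    have hind_lt : ∀ n m, ind n m < k n := fun n m => (en n _).isLt
    have hind_inj : ∀ n a b, ind n a = ind n b → pc n a = pc n b := by
      intro n a b hab
      have h1 : en n ⟨pc n a, hpc1 n a⟩ = en n ⟨pc n b, hpc1 n b⟩ := Fin.ext hab
      have h2 := hen n h1
      exact congrArg Subtype.val h2
    set s : ℕ → ℕ := fun n => ∑ j ∈ Finset.range n, k j with hs
    have hs_succ : ∀ n, s (n+1) = s n + k n := by
      intro n; simp [hs, Finset.sum_range_succ]
    have hs_mono : StrictMono s := by
      apply strictMono_nat_of_lt_succ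
      intro n
      have := hk1 n
      rw [hs_succ n]
      omega
    have hs_ge : ∀ n, n ≤ s n := fun n => hs_mono.le_apply
    set blk : ℕ → ℕ := fun i => Nat.findGreatest (fun n => s n ≤ i) i with hblkdef
    have hblk : ∀ n i, s n ≤ i → i < s (n+1) → blk i = n := by
      intro n i h1 h2
      apply Nat.findGreatest_eq_iff.mpr
      refine ⟨le_trans (hs_ge n) h1, fun _ => h1, ?_⟩
      intro m hm _ hle
      have : s (n+1) ≤ s m := hs_mono.monotone hm
      omega
    set F : ℕ → ℕ → Bool := fun m i => decide (ind (blk i) m = i - s (blk i)) with hF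
    have key : ∀ n a b,
        (fun i : Fin (s (n+1)) => F a i) = (fun i : Fin (s (n+1)) => F b i) →
        pc n a = pc n b := by
      intro n a b hab
      apply hind_inj n
      have hlt : ind n a < k n := hind_lt n a
      have hi : s n + ind n a < s (n+1) := by rw [hs_succ]; omega
      have hb : blk (s n + ind n a) = n := hblk n _ (Nat.le_add_right _ _) hi
      have hcf : F a (s n + ind n a) = F b (s n + ind n a) :=
        congrFun hab ⟨s n + ind n a, hi⟩
      simp only [hF, hb, Nat.add_sub_cancel_left, decide_eq_decide] at hcf
      exact (hcf.mp trivial).symm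
    set f : ℕ → ℕ := fun j => ((Finset.range j).filter (fun n => s (n+2) ≤ j)).card with hfdef
    have hf_mono : Monotone f := by
      intro a b hab
      apply Finset.card_le_card
      intro n hn
      simp only [Finset.mem_filter, Finset.mem_range] at *
      exact ⟨lt_of_lt_of_le hn.1 hab, le_trans hn.2 hab⟩
    have hf_unb : ∀ m, ∃ j, m ≤ f j := by
      intro m
      refine ⟨s (m+2), ?_⟩
      have hsub : Finset.range (m+1) ⊆
          (Finset.range (s (m+2))).filter (fun n => s (n+2) ≤ s (m+2)) := by
        intro n hn
        simp only [Finset.mem_range] at hn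
        simp only [Finset.mem_filter, Finset.mem_range]
        constructor
        · have := hs_ge (m+2); omega
        · exact hs_mono.monotone (by omega)
      have hcard := Finset.card_le_card hsub
      simp only [Finset.card_range] at hcard
      simp only [hfdef]
      omega
    have hf_val : ∀ n, f (s (n+1)) ≤ n := by
      intro n
      have hsub : (Finset.range (s (n+1))).filter (fun m => s (m+2) ≤ s (n+1)) ⊆
          Finset.range n := by
        intro m hm
        simp only [Finset.mem_filter, Finset.mem_range] at hm ⊢
        have : m + 2 ≤ n + 1 := by
          by_contra hc
          push_neg at hc
          have := hs_mono (show n + 1 < m + 2 by omega)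
          omega
        omega
      have hcard := Finset.card_le_card hsub
      simp only [Finset.card_range] at hcard
      simp only [hfdef]
      omega
    obtain ⟨x, hx, hlev⟩ := hprop F f hf_mono hf_unb
    refine ⟨x, hx, ?_⟩
    intro n
    have hlev' := hlev (s (n+1))
    rw [level_eq] at hlev'
    have hfv := hf_val n
    set w : Set ℕ → ℕ := fun p => if h : (x ∩ p).Nonempty then h.choose else 0 with hw
    have hwmem : ∀ p, (x ∩ p).Nonempty → w p ∈ x ∩ p := by
      intro p hp
      simp only [hw, dif_pos hp]
      exact hp.choose_spec
    have hle : ((fun m => fun i : Fin (s (n+1)) => F m i) '' x).ncard ≤ n + 1 := by omega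
    refine le_trans (Set.ncard_le_ncard_of_injOn
      (fun p => (fun i : Fin (s (n+1)) => F (w p) i)) ?_ ?_ ?_) hle
    · intro p hp
      exact ⟨w p, (hwmem p hp.2).1, rfl⟩
    · intro p hp q hq heq
      have h1 := hwmem p hp.2
      have h2 := hwmem q hq.2
      have h3 := key n (w p) (w q) heq
      rw [← huniq n p hp.1 (w p) h1.2, ← huniq n q hq.1 (w q) h2.2]
      exact h3
    · exact Set.toFinite _
end

section
/- A non-principal ultrafilter U on ℕ is a Laver ultrafilter if and only if for every f ∈ H, U is an I_f-ultrafilter, i.e., for every function F : ℕ → 2^ω there exists x ∈ U with F[x] ∈ I_f. -/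
/-- The class `H` of non-decreasing, unbounded `f : ℕ → ℕ` with `f n ≤ n`. -/
def memH (f : ℕ → ℕ) : Prop :=
  Monotone f ∧ (∀ m : ℕ, ∃ n, m ≤ f n) ∧ ∀ n, f n ≤ n

/-- The ideal `I_f` on `2^ω`. -/
def idealI (f : ℕ → ℕ) : Set (Set (ℕ → Bool)) :=
  {A | ∀ d : ℕ, 1 ≤ d → ∀ᶠ n in Filter.atTop, d * level A n ≤ f n}

/-! Both directions go through a reformulation of the Laver property by maps `g n` from `ℕ`
into finite sets (partitions being their fibres): some `x ∈ U` has `|g n '' x| ≤ n + 1` for all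
`n`. It suffices to get this for almost all `n`, because `U` concentrates on a single fibre of
each `g n`.

Given the Laver property, `f ∈ H` and `F`, pick `m j` with `f (m j) ≥ (j + 2)²` and apply it to
`g j k = F k ↾ m j`: then `level (F '' x) (m j) ≤ j + 1`, which puts `d * level` eventually below
`f`. Conversely, given `g`, write `g n k` in unary in the `n`-th block of a sequence `F k`, and let
`f p` be the index of the block containing `p`; the `I_f` condition with `d = 1` at the end of
block `n` bounds `|g n '' x|` by `n + 1`. -/

open Filter Set

lemma ncard_image_le_ncard_image_of_factor {α β γ : Type*} {g : α → β} {h : α → γ} {s : Set α}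
    (hs : (h '' s).Finite) (hgh : ∀ a ∈ s, ∀ b ∈ s, h a = h b → g a = g b) :
    (g '' s).ncard ≤ (h '' s).ncard := by
  rcases s.eq_empty_or_nonempty with rfl | ⟨a, ha⟩
  · simp
  have : Nonempty α := ⟨a⟩
  refine ncard_le_ncard_of_injOn (fun y => h (Function.invFunOn g s y)) ?_ ?_ hs
  · rintro y ⟨b, hb, rfl⟩
    exact mem_image_of_mem h (Function.invFunOn_mem ⟨b, hb, rfl⟩)
  · rintro _ ⟨b, hb, rfl⟩ _ ⟨c, hc, rfl⟩ hbc
    rw [← Function.invFunOn_eq (f := g) ⟨b, hb, rfl⟩, ← Function.invFunOn_eq (f := g) ⟨c, hc, rfl⟩]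
    exact hgh _ (Function.invFunOn_mem ⟨b, hb, rfl⟩) _ (Function.invFunOn_mem ⟨c, hc, rfl⟩) hbc

universe u

section Laver

variable {S : Type u}

lemma isFinPartition_fibers {β : Type*} [Finite β] (g : S → β) :
    IsFinPartition (range (fun b => g ⁻¹' {b}) \ {∅}) := by
  refine ⟨(finite_range _).sdiff, fun h => h.2 rfl, ?_, ?_⟩
  · refine eq_univ_of_forall fun k => ⟨g ⁻¹' {g k}, ⟨⟨g k, rfl⟩, ?_⟩, rfl⟩
    exact (nonempty_of_mem (show k ∈ g ⁻¹' {g k} from rfl)).ne_empty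
  · rintro _ ⟨⟨a, rfl⟩, -⟩ _ ⟨⟨b, rfl⟩, -⟩ hab
    exact (disjoint_singleton.mpr fun h => hab (congrArg (fun b => g ⁻¹' {b}) h)).preimage g

lemma IsLaverUltrafilter.exists_forall_ncard_image_le {U : Ultrafilter S} (hL : IsLaverUltrafilter U)
    {β : ℕ → Type*} [∀ n, Finite (β n)] (g : ∀ n, S → β n) :
    ∃ x ∈ U, ∀ n, (g n '' x).ncard ≤ n + 1 := by
  obtain ⟨x, hxU, hx⟩ := hL.2 _ fun n => isFinPartition_fibers (g n)
  refine ⟨x, hxU, fun n => le_trans ?_ (hx n)⟩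
  refine ncard_le_ncard_of_injOn (fun b => g n ⁻¹' {b}) ?_ ?_
    ((isFinPartition_fibers (g n)).1.subset (sep_subset _ _))
  · rintro _ ⟨k, hk, rfl⟩
    exact ⟨⟨⟨_, rfl⟩, (nonempty_of_mem (show k ∈ g n ⁻¹' {g n k} from rfl)).ne_empty⟩,
      k, hk, rfl⟩
  · rintro _ ⟨k, -, rfl⟩ _ _ hfib
    exact (show k ∈ g n ⁻¹' {_} by simp only at hfib; rw [← hfib]; rfl)

lemma Ultrafilter.exists_forall_ncard_image_le_of_eventually (U : Ultrafilter S)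
    {β : ℕ → Type*} [∀ n, Finite (β n)] (g : ∀ n, S → β n)
    (h : ∃ x ∈ U, ∀ᶠ n in atTop, (g n '' x).ncard ≤ n + 1) :
    ∃ x ∈ U, ∀ n, (g n '' x).ncard ≤ n + 1 := by
  obtain ⟨x, hxU, hx⟩ := h
  obtain ⟨N, hN⟩ := eventually_atTop.mp hx
  choose b hb using fun n => (U.map (g n)).eq_pure_of_finite
  have hfib : ∀ n, g n ⁻¹' {b n} ∈ U := fun n => by simp [← Ultrafilter.mem_map, hb n]
  refine ⟨x ∩ ⋂ n ∈ Finset.range N, g n ⁻¹' {b n},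
    inter_mem hxU ((biInter_finset_mem _).mpr fun n _ => hfib n), fun n => ?_⟩
  rcases lt_or_ge n N with hn | hn
  · have hsub : g n '' (x ∩ ⋂ n ∈ Finset.range N, g n ⁻¹' {b n}) ⊆ {b n} := by
      rintro _ ⟨k, ⟨-, hk⟩, rfl⟩
      exact mem_iInter₂.mp hk n (Finset.mem_range.mpr hn)
    exact (ncard_le_ncard hsub).trans (by simp)
  · exact (ncard_le_ncard (image_mono inter_subset_left) (toFinite _)).trans (hN n hn)

lemma isLaverUltrafilter_of_eventually_ncard_image_le {U : Ultrafilter S}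
    (hU : cofinite ≤ (U : Filter S))
    (h : ∀ (β : ℕ → Type u) [∀ n, Finite (β n)] (g : ∀ n, S → β n),
      ∃ x ∈ U, ∀ᶠ n in atTop, (g n '' x).ncard ≤ n + 1) :
    IsLaverUltrafilter U := by
  refine ⟨hU, fun P hP => ?_⟩
  have : ∀ n, Finite (P n) := fun n => (hP n).1.to_subtype
  have hcover : ∀ n k, ∃ p : P n, k ∈ (p : Set S) := fun n k => by
    obtain ⟨p, hp, hkp⟩ := mem_sUnion.mp ((hP n).2.2.1.symm ▸ mem_univ k)
    exact ⟨⟨p, hp⟩, hkp⟩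
  choose piece hpiece using hcover
  obtain ⟨x, hxU, hx⟩ := U.exists_forall_ncard_image_le_of_eventually piece (h _ piece)
  refine ⟨x, hxU, fun n => le_trans ?_ (hx n)⟩
  calc {p ∈ P n | (x ∩ p).Nonempty}.ncard ≤ (Subtype.val '' (piece n '' x)).ncard := by
        refine ncard_le_ncard ?_ (toFinite _)
        rintro p ⟨hp, k, hkx, hkp⟩
        refine ⟨piece n k, mem_image_of_mem _ hkx, ?_⟩
        by_contra hne
        exact ((hP n).2.2.2 (piece n k).2 hp hne).ne_of_mem (hpiece n k) hkp rfl
    _ ≤ (piece n '' x).ncard := ncard_image_le (toFinite _)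

end Laver

lemma level_image_eq {ι : Type*} (F : ι → ℕ → Bool) (x : Set ι) (n : ℕ) :
    level (F '' x) n = ((fun k (i : Fin n) => F k i) '' x).ncard := by
  rw [level, image_image]

lemma level_mono (A : Set (ℕ → Bool)) : Monotone (level A) := fun _ _ hn =>
  ncard_image_le_ncard_image_of_factor (toFinite _)
    fun _ _ _ _ hab => funext fun i => congrFun hab (Fin.castLE hn i)

/-- With `ℓ = L n`: either `ℓ ≤ d + 2`, or `n ≥ m (ℓ - 2)`, where `f ≥ ℓ²`. -/
lemma eventually_mul_le_of_le_at {f L m : ℕ → ℕ} (hf : Monotone f) (hL : Monotone L)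
    (hfm : ∀ j, (j + 2) ^ 2 ≤ f (m j)) (hLm : ∀ j, L (m j) ≤ j + 1)
    (d : ℕ) : ∀ᶠ n in atTop, d * L n ≤ f n := by
  filter_upwards [eventually_ge_atTop (m d)] with n hn
  rcases le_or_gt (L n) (d + 2) with hsmall | hlarge
  · calc d * L n ≤ (d + 2) ^ 2 := by nlinarith
      _ ≤ f n := (hfm d).trans (hf hn)
  · obtain ⟨j, hj⟩ : ∃ j, L n = j + 2 := ⟨L n - 2, by omega⟩
    have hmj : m j ≤ n := by
      by_contra! h
      have := (hL h.le).trans (hLm j)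
      omega
    calc d * L n ≤ (j + 2) ^ 2 := by rw [hj]; nlinarith
      _ ≤ f n := (hfm j).trans (hf hmj)

lemma IsLaverUltrafilter.exists_image_mem_idealI {U : Ultrafilter ℕ} (hL : IsLaverUltrafilter U)
    {f : ℕ → ℕ} (hf : Monotone f) (hf_unbdd : ∀ m, ∃ n, m ≤ f n) (F : ℕ → ℕ → Bool) :
    ∃ x ∈ U, F '' x ∈ idealI f := by
  choose m hfm using fun j => hf_unbdd ((j + 2) ^ 2)
  obtain ⟨x, hxU, hx⟩ := hL.exists_forall_ncard_image_le fun j k (i : Fin (m j)) => F k i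
  refine ⟨x, hxU, fun d _ => eventually_mul_le_of_le_at hf (level_mono _) hfm (fun j => ?_) d⟩
  rw [level_image_eq]
  exact hx j

/-- Block `n` occupies the positions `blockStart c n + i` for `i ≤ c n`. -/
def blockStart (c : ℕ → ℕ) : ℕ → ℕ
  | 0 => 0
  | n + 1 => blockStart c n + c n + 1

lemma blockStart_strictMono (c : ℕ → ℕ) : StrictMono (blockStart c) :=
  strictMono_nat_of_lt_succ fun n => by simp only [blockStart]; omega

def blockIdx (c : ℕ → ℕ) (p : ℕ) : ℕ := Nat.findGreatest (fun j => blockStart c j ≤ p) p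

lemma blockIdx_blockStart_add (c : ℕ → ℕ) {n i : ℕ} (hi : i ≤ c n) :
    blockIdx c (blockStart c n + i) = n := by
  rw [blockIdx, Nat.findGreatest_eq_iff]
  refine ⟨(blockStart_strictMono c).le_apply.trans (Nat.le_add_right _ _),
    fun _ => Nat.le_add_right _ _, fun j hj _ hle => ?_⟩
  have := (blockStart_strictMono c).monotone hj
  simp only [blockStart] at this
  omega

lemma blockIdx_blockStart (c : ℕ → ℕ) (n : ℕ) : blockIdx c (blockStart c n) = n :=
  blockIdx_blockStart_add c (Nat.zero_le _)

lemma memH_blockIdx (c : ℕ → ℕ) : memH (blockIdx c) := by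
  refine ⟨fun p q hpq => ?_, fun n => ⟨blockStart c n, (blockIdx_blockStart c n).ge⟩,
    fun p => Nat.findGreatest_le p⟩
  have hstart : blockStart c (blockIdx c p) ≤ p :=
    Nat.findGreatest_spec (P := fun j => blockStart c j ≤ p) (Nat.zero_le p) (by simp [blockStart])
  exact Nat.le_findGreatest ((Nat.findGreatest_le p).trans hpq) (hstart.trans hpq)

section Coding

variable {β : ℕ → Type*} [∀ n, Finite (β n)] (g : ∀ n, ℕ → β n)

noncomputable abbrev cardSeq (β : ℕ → Type*) [∀ n, Finite (β n)] (n : ℕ) : ℕ := Nat.card (β n)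

/-- Writes, in block `n`, the value `g n k` in unary: a single `true` at the offset given by
the index of `g n k` in an enumeration of `β n`. -/
noncomputable def blockCode (k p : ℕ) : Bool :=
  let n := blockIdx (cardSeq β) p
  decide (blockStart (cardSeq β) n + Finite.equivFin (β n) (g n k) = p)

lemma blockCode_blockStart_add {n i : ℕ} (hi : i ≤ cardSeq β n) (k : ℕ) :
    blockCode g k (blockStart (cardSeq β) n + i) = true ↔
      (Finite.equivFin (β n) (g n k) : ℕ) = i := by
  have hidx := blockIdx_blockStart_add (cardSeq β) hi
  simp only [blockCode]
  generalize blockIdx (cardSeq β) (blockStart (cardSeq β) n + i) = m at hidx ⊢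
  subst hidx
  simp only [decide_eq_true_eq, Nat.add_left_cancel_iff]

lemma ncard_image_le_level_blockCode (x : Set ℕ) (n : ℕ) :
    (g n '' x).ncard ≤ level (blockCode g '' x) (blockStart (cardSeq β) (n + 1)) := by
  rw [level_image_eq]
  refine ncard_image_le_ncard_image_of_factor (toFinite _) fun a _ b _ hab => ?_
  set i := (Finite.equivFin (β n) (g n a) : ℕ)
  have hi : i < cardSeq β n + 1 := Nat.lt_succ_of_lt (Finite.equivFin (β n) (g n a)).2
  have hpos : blockStart (cardSeq β) n + i < blockStart (cardSeq β) (n + 1) := by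
    simp only [blockStart]; omega
  have hb : blockCode g b (blockStart (cardSeq β) n + i) = true := by
    rw [← congrFun hab ⟨_, hpos⟩]
    exact (blockCode_blockStart_add g (by omega) a).mpr rfl
  rw [blockCode_blockStart_add g (by omega)] at hb
  exact ((Finite.equivFin (β n)).injective (Fin.ext hb)).symm

lemma eventually_ncard_image_le_of_mem_idealI {x : Set ℕ}
    (hx : blockCode g '' x ∈ idealI (blockIdx (cardSeq β))) :
    ∀ᶠ n in atTop, (g n '' x).ncard ≤ n + 1 := by
  have hstart : Tendsto (fun n => blockStart (cardSeq β) (n + 1)) atTop atTop :=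
    (blockStart_strictMono _).tendsto_atTop.comp (tendsto_add_atTop_nat 1)
  filter_upwards [hstart.eventually (hx 1 le_rfl)] with n hn
  rw [one_mul, blockIdx_blockStart] at hn
  exact (ncard_image_le_level_blockCode g x n).trans hn

end Coding

theorem stmt_2 (U : Ultrafilter ℕ) (hU : Filter.cofinite ≤ (U : Filter ℕ)) :
    IsLaverUltrafilter U ↔
      ∀ f : ℕ → ℕ, memH f → ∀ F : ℕ → (ℕ → Bool), ∃ x ∈ U, F '' x ∈ idealI f := by
  refine ⟨fun hL f hf F => hL.exists_image_mem_idealI hf.1 hf.2.1 F, fun hI => ?_⟩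
  refine isLaverUltrafilter_of_eventually_ncard_image_le hU fun β _ g => ?_
  obtain ⟨x, hxU, hx⟩ := hI _ (memH_blockIdx (cardSeq β)) (blockCode g)
  exact ⟨x, hxU, eventually_ncard_image_le_of_mem_idealI g hx⟩
end

section
/- If U is a Laver ultrafilter on ℕ and V is a non-principal ultrafilter on ℕ with V ≤_RK U, then V is a Laver ultrafilter. -/
/-- `V ≤_RK U`: `V` is Rudin–Keisler below `U`. -/
def RKBelow (V U : Ultrafilter ℕ) : Prop :=
  ∃ f : ℕ → ℕ, ∀ x ∈ V, f ⁻¹' x ∈ U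

theorem stmt_3 (U V : Ultrafilter ℕ) (hU : IsLaverUltrafilter U)
    (hV : Filter.cofinite ≤ (V : Filter ℕ)) (hRK : RKBelow V U) :
    IsLaverUltrafilter V := by
  obtain ⟨f, hf⟩ := hRK
  refine ⟨hV, fun P hP => ?_⟩
  -- pull back the partitions
  set Q : ℕ → Set (Set ℕ) := fun n => ((fun p => f ⁻¹' p) '' (P n)) \ {∅} with hQ
  have hQpart : ∀ n, IsFinPartition (Q n) := by
    intro n
    obtain ⟨hfin, hne, hcov, hdisj⟩ := hP n
    refine ⟨((hfin.image _).subset Set.diff_subset), ?_, ?_, ?_⟩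
    · intro h; exact h.2 rfl
    · ext a
      simp only [Set.mem_univ, iff_true, Set.mem_sUnion]
      have : f a ∈ ⋃₀ P n := by rw [hcov]; trivial
      obtain ⟨p, hp, hfa⟩ := this
      exact ⟨f ⁻¹' p, ⟨⟨p, hp, rfl⟩, fun h => by
        have : a ∈ f ⁻¹' p := hfa
        rw [Set.mem_singleton_iff.mp h] at this; exact this⟩, hfa⟩
    · rintro q ⟨⟨p, hp, rfl⟩, hqne⟩ q' ⟨⟨p', hp', rfl⟩, hq'ne⟩ hne'
      have hpp' : p ≠ p' := by rintro rfl; exact hne' rfl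
      exact (hdisj hp hp' hpp').preimage f
  obtain ⟨x, hxU, hx⟩ := hU.2 Q hQpart
  refine ⟨f '' x, ?_, ?_⟩
  · -- f '' x ∈ V
    by_contra h
    have hc : (f '' x)ᶜ ∈ V := Ultrafilter.compl_mem_iff_notMem.mpr h
    have := hf _ hc
    have hx' : x ∩ f ⁻¹' (f '' x)ᶜ ∈ U := (U : Filter ℕ).inter_mem hxU this
    obtain ⟨a, ha, hac⟩ := Ultrafilter.nonempty_of_mem hx'
    exact hac ⟨a, ha, rfl⟩
  · intro n
    refine le_trans ?_ (hx n)
    refine Set.ncard_le_ncard_of_injOn (fun p => f ⁻¹' p) ?_ ?_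
      ((((hP n).1.image _).subset Set.diff_subset).subset (Set.sep_subset _ _))
    · rintro p ⟨hp, b, ⟨⟨a, ha, rfl⟩, hbp⟩⟩
      refine ⟨⟨⟨p, hp, rfl⟩, fun h => ?_⟩, a, ha, hbp⟩
      have h2 : f ⁻¹' p = ∅ := h
      have : a ∈ f ⁻¹' p := hbp
      rw [h2] at this; exact this
    · rintro p ⟨hp, b, ⟨⟨a, ha, rfl⟩, hbp⟩⟩ p' ⟨hp', b', ⟨⟨a', ha', rfl⟩, hbp'⟩⟩ hpp'
      by_contra hne
      have hd := (hP n).2.2.2 hp hp' hne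
      have hpp2 : f ⁻¹' p = f ⁻¹' p' := hpp'
      have : a ∈ f ⁻¹' p ∩ f ⁻¹' p' := ⟨hbp, by rw [← hpp2]; exact hbp⟩
      exact (hd.preimage f).ne_of_mem this.1 this.2 rfl
end

section
/- Every Laver ultrafilter U on ℕ is hereditarily rapid: if V is a non-principal ultrafilter on ℕ with V ≤_RK U, then V is rapid. -/
/-- A rapid ultrafilter. -/
def IsRapid (U : Ultrafilter ℕ) : Prop :=
  ∀ f : ℕ → ℕ, StrictMono f → ∃ x ∈ U, ∀ n, (x ∩ {k | k < f n}).ncard ≤ n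

theorem stmt_4 (U : Ultrafilter ℕ) (hU : IsLaverUltrafilter U) :
    ∀ V : Ultrafilter ℕ, Filter.cofinite ≤ (V : Filter ℕ) → RKBelow V U → IsRapid V := by
  rintro V hV ⟨g, hg⟩ f hf
  set h : ℕ → ℕ → ℕ := fun n m => min (g m) (f n) with hh
  set P : ℕ → Set (Set ℕ) := fun n => Set.range (fun m => (h n) ⁻¹' {h n m}) with hP
  have hPfin : ∀ n, (P n).Finite := by
    intro n
    apply Set.Finite.subset (((Set.finite_Iic (f n))).image (fun k => (h n) ⁻¹' {k}))
    rintro p ⟨m, rfl⟩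
    exact ⟨h n m, Set.mem_Iic.2 (min_le_right _ _), rfl⟩
  have hPpart : ∀ n, IsFinPartition (P n) := by
    intro n
    refine ⟨hPfin n, ?_, ?_, ?_⟩
    · rintro ⟨m, hm⟩
      have hmm : m ∈ (fun m => (h n) ⁻¹' {h n m}) m := rfl
      rw [hm] at hmm
      exact hmm
    · ext m
      simp only [Set.mem_sUnion, Set.mem_univ, iff_true]
      exact ⟨_, ⟨m, rfl⟩, rfl⟩
    · rintro p ⟨a, rfl⟩ q ⟨b, rfl⟩ hpq
      have hab : h n a ≠ h n b := fun e => hpq (congrArg (fun t => (h n) ⁻¹' ({t} : Set ℕ)) e)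
      rw [Set.disjoint_left]
      rintro m (hma : h n m = h n a) (hmb : h n m = h n b)
      exact hab (hma ▸ hmb)
  obtain ⟨x, hxU, hx⟩ := hU.2 P hPpart
  set y : Set ℕ := g '' x with hy
  have hyV : y ∈ V := by
    by_contra hyV
    have h1 : (g ⁻¹' yᶜ) ∈ U := hg _ (Ultrafilter.compl_mem_iff_notMem.2 hyV)
    have h2 : (g ⁻¹' y) ∈ U := Filter.mem_of_superset hxU (Set.subset_preimage_image g x)
    have := Filter.inter_mem h1 h2
    rw [← Set.preimage_inter, Set.compl_inter_self, Set.preimage_empty] at this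
    exact U.toFilter.empty_notMem this
  have hyInf : y.Infinite := by
    intro hfin
    have hc : yᶜ.Finite := hV hyV
    exact Set.infinite_univ (α := ℕ) (by rw [← Set.union_compl_self y]; exact hfin.union hc)
  refine ⟨y, hyV, fun n => ?_⟩
  obtain ⟨k0, hk0y, hk0⟩ := hyInf.exists_gt (f n)
  set A : Set ℕ := y ∩ {k | k < f n} with hA
  have hAfin : A.Finite := (Set.finite_Iio (f n)).inter_of_right _
  set ψ : ℕ → Set ℕ := fun k => (h n) ⁻¹' {min k (f n)} with hψ
  -- each k in insert k0 A has a witness m ∈ x with h n m = min k (f n)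
  have hwit : ∀ k ∈ insert k0 A, ∃ m ∈ x, h n m = min k (f n) := by
    rintro k hk
    have hky : k ∈ y := by
      rcases hk with rfl | hk
      · exact hk0y
      · exact hk.1
    obtain ⟨m, hmx, rfl⟩ := hky
    exact ⟨m, hmx, rfl⟩
  have hsub : ψ '' insert k0 A ⊆ {p ∈ P n | (x ∩ p).Nonempty} := by
    rintro p ⟨k, hk, rfl⟩
    obtain ⟨m, hmx, hm⟩ := hwit k hk
    refine ⟨⟨m, ?_⟩, ⟨m, hmx, ?_⟩⟩
    · simp [hψ, hm]
    · simp [hψ, ← hm]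
  have hmineq : ∀ k ∈ insert k0 A, ∀ k' ∈ insert k0 A,
      min k (f n) = min k' (f n) → k = k' := by
    rintro k hk k' hk' he
    rcases hk with rfl | hk <;> rcases hk' with rfl | hk'
    · rfl
    · rw [min_eq_right hk0.le, min_eq_left hk'.2.le] at he
      exact absurd he.symm (ne_of_lt hk'.2)
    · rw [min_eq_left hk.2.le, min_eq_right hk0.le] at he
      exact absurd he (ne_of_lt hk.2)
    · rwa [min_eq_left hk.2.le, min_eq_left hk'.2.le] at he
  have hinj : Set.InjOn ψ (insert k0 A) := by
    rintro k hk k' hk' he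
    obtain ⟨m, hmx, hm⟩ := hwit k hk
    have hmem : m ∈ ψ k := by simp [hψ, hm]
    rw [he] at hmem
    have : h n m = min k' (f n) := hmem
    exact hmineq k hk k' hk' (hm ▸ this)
  have hk0A : k0 ∉ A := fun hc => absurd hc.2 (not_lt.2 hk0.le)
  have hcard : (insert k0 A).ncard = A.ncard + 1 :=
    Set.ncard_insert_of_notMem hk0A hAfin
  have hle : (insert k0 A).ncard ≤ n + 1 := by
    rw [← Set.ncard_image_of_injOn hinj]
    exact le_trans (Set.ncard_le_ncard hsub ((hPfin n).subset (Set.sep_subset _ _))) (hx n)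
  have : A.ncard ≤ n := by omega
  exact this
end

section
/- For every strictly increasing f : ℕ → ℕ there exists g ∈ H such that I_g ⊆ 𝒴_f, i.e., every set A ⊆ 2^ω with A ∈ I_g belongs to the Yorioka ideal 𝒴_f. -/
/-- The basic clopen set `[s]` of branches through the finite binary sequence `s`. -/
def cylinder (s : List Bool) : Set (ℕ → Bool) :=
  {x | ∀ i : Fin s.length, x i = s.get i}

/-- `[σ]_∞ := ⋂_n ⋃_{m ≥ n} [σ(m)]`. -/
def limsupCyl (σ : ℕ → List Bool) : Set (ℕ → Bool) :=
  ⋂ n, ⋃ m ≥ n, cylinder (σ m)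

/-- `f ≪ g` iff for every `k`, `f (i ^ k) ≤ g i` for all but finitely many `i`. -/
def ll (f g : ℕ → ℕ) : Prop :=
  ∀ k : ℕ, ∀ᶠ i in Filter.atTop, f (i ^ k) ≤ g i

/-- The Yorioka ideal `𝒴_f`. -/
def Yorioka (f : ℕ → ℕ) : Set (Set (ℕ → Bool)) :=
  {X | ∃ σ : ℕ → List Bool, X ⊆ limsupCyl σ ∧ ll f (fun i => (σ i).length)}

/-!
Take the levels `n j := f ((j + 1) ^ (2 * j)) + j`, strictly increasing, and let `g m` be the
largest `j` with `n j ≤ m`, so that `g (n j) = j`. If `A ∈ I_g`, then for large `j` the set `A`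
has at most `j` restrictions to length `n j`; list them at the indices of the block
`[j², (j + 1)²)`. Every `x ∈ A` then lies in `[σ i]` for infinitely many `i`, and
`|σ i| = n ⌊√i⌋ ≥ f ((⌊√i⌋ + 1) ^ (2 ⌊√i⌋)) ≥ f (i ^ k)` as soon as `⌊√i⌋ ≥ k`,
since `i < (⌊√i⌋ + 1)²`.
-/

open Filter

def levelIndex (n : ℕ → ℕ) (m : ℕ) : ℕ :=
  Nat.findGreatest (fun j => n j ≤ m) m

section levelIndex

variable {n : ℕ → ℕ}

lemma levelIndex_apply (hn : StrictMono n) (j : ℕ) : levelIndex n (n j) = j :=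
  le_antisymm
    (hn.le_iff_le.mp (Nat.findGreatest_spec (P := fun i => n i ≤ n j) (hn.id_le j) le_rfl))
    (Nat.le_findGreatest (hn.id_le j) le_rfl)

lemma memH_levelIndex (hn : StrictMono n) : memH (levelIndex n) :=
  ⟨fun _ _ h => Nat.findGreatest_mono (fun _ hj => hj.trans h) h,
    fun M => ⟨n M, (levelIndex_apply hn M).ge⟩, fun m => Nat.findGreatest_le m⟩

end levelIndex

noncomputable def restrictions (A : Set (ℕ → Bool)) (m : ℕ) : List (Fin m → Bool) :=
  (Set.toFinite ((fun x : ℕ → Bool => fun i : Fin m => x i) '' A)).toFinset.toList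

lemma length_restrictions (A : Set (ℕ → Bool)) (m : ℕ) :
    (restrictions A m).length = level A m := by
  rw [restrictions, Finset.length_toList, level, Set.ncard_eq_toFinset_card]

lemma restrict_mem_restrictions {A : Set (ℕ → Bool)} {x : ℕ → Bool} (hx : x ∈ A) (m : ℕ) :
    (fun i : Fin m => x i) ∈ restrictions A m := by
  rw [restrictions, Finset.mem_toList, Set.Finite.mem_toFinset]
  exact ⟨x, hx, rfl⟩

lemma mem_cylinder_ofFn (x : ℕ → Bool) (m : ℕ) : x ∈ cylinder (List.ofFn fun i : Fin m => x i) :=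
  fun i => by simp

lemma mem_limsupCyl_iff {σ : ℕ → List Bool} {x : ℕ → Bool} :
    x ∈ limsupCyl σ ↔ ∃ᶠ m in atTop, x ∈ cylinder (σ m) := by
  simp [limsupCyl, frequently_atTop]

lemma exists_subset_limsupCyl_of_level_le {A : Set (ℕ → Bool)} {n : ℕ → ℕ}
    (hA : ∀ᶠ j in atTop, level A (n j) ≤ 2 * j + 1) :
    ∃ σ : ℕ → List Bool, A ⊆ limsupCyl σ ∧ ∀ i, (σ i).length = n i.sqrt := by
  refine ⟨fun i => List.ofFn
    ((restrictions A (n i.sqrt)).getD (i - i.sqrt * i.sqrt) fun _ => false),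
    fun x hx => ?_, fun i => List.length_ofFn⟩
  obtain ⟨J, hJ⟩ := eventually_atTop.mp hA
  rw [mem_limsupCyl_iff, frequently_atTop]
  intro N
  set j := max N J
  obtain ⟨r, hr, hget⟩ := List.getElem_of_mem (restrict_mem_restrictions hx (n j))
  have hrj : r ≤ j + j := by
    have := hJ j (le_max_right N J)
    rw [← length_restrictions] at this
    omega
  refine ⟨j * j + r, Nat.le_add_right_of_le ((le_max_left N J).trans (Nat.le_mul_self j)), ?_⟩
  -- `σ i` is built from a list of type `List (Fin (n ⌊√i⌋) → Bool)`, so `⌊√i⌋` cannot be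
  -- rewritten in place.
  generalize hs : (j * j + r).sqrt = s
  obtain rfl : s = j := hs ▸ Nat.sqrt_add_eq j hrj
  rw [Nat.add_sub_cancel_left, List.getD_eq_getElem _ _ hr, hget]
  exact mem_cylinder_ofFn x _

lemma ll_comp_sqrt_of_le {f n : ℕ → ℕ} (hf : Monotone f)
    (hn : ∀ j, f ((j + 1) ^ (2 * j)) ≤ n j) : ll f fun i => n i.sqrt := by
  intro k
  filter_upwards [eventually_ge_atTop (k ^ 2)] with i hi
  have hk : k ≤ i.sqrt := Nat.le_sqrt'.mpr hi
  refine (hf ?_).trans (hn _)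
  calc i ^ k ≤ ((i.sqrt + 1) ^ 2) ^ k := Nat.pow_le_pow_left (Nat.lt_succ_sqrt' i).le k
    _ = (i.sqrt + 1) ^ (2 * k) := by rw [← pow_mul]
    _ ≤ (i.sqrt + 1) ^ (2 * i.sqrt) := Nat.pow_le_pow_right i.sqrt.succ_pos (by omega)

theorem stmt_8 (f : ℕ → ℕ) (hf : StrictMono f) :
    ∃ g : ℕ → ℕ, memH g ∧ idealI g ⊆ Yorioka f := by
  set n : ℕ → ℕ := fun j => f ((j + 1) ^ (2 * j)) + j
  have hn : StrictMono n := fun a b hab => by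
    have : f ((a + 1) ^ (2 * a)) ≤ f ((b + 1) ^ (2 * b)) := hf.monotone (by gcongr; omega)
    simp only [n]
    omega
  refine ⟨levelIndex n, memH_levelIndex hn, fun A hA => ?_⟩
  have hlevel : ∀ᶠ j in atTop, level A (n j) ≤ 2 * j + 1 := by
    filter_upwards [hn.tendsto_atTop.eventually (hA 1 le_rfl)] with j hj
    rw [one_mul, levelIndex_apply hn] at hj
    omega
  obtain ⟨σ, hAσ, hσ⟩ := exists_subset_limsupCyl_of_level_le hlevel
  refine ⟨σ, hAσ, ?_⟩
  simpa only [hσ] using ll_comp_sqrt_of_le hf.monotone fun j => Nat.le_add_right _ j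
end

section
/- If U is a Laver ultrafilter on ℕ, then for every strictly increasing f : ℕ → ℕ, U is a 𝒴_f^0-ultrafilter: for every function F : ℕ → 2^ω there exists x ∈ U such that the topological closure of F[x] in 2^ω belongs to the Yorioka ideal 𝒴_f. -/
/-!
Put `L n := f (2 ^ ((n + 1) * n))` and partition `ℕ` according to the initial segment of length
`L n` of `F m`. The Laver property gives `x ∈ U` on which at most `n + 1 ≤ 2 ^ n` segments of
length `L n` occur, so those of level `n` can be listed as `σ i` for `i` in the dyadic block
`[2 ^ n, 2 ^ (n + 1))`. Every point of the closure of `F[x]` has all its initial segments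
realised on `x`, so it lies in infinitely many `[σ i]`; and `|σ i| = L (log₂ i) ≥ f (i ^ k)`
as soon as `i ≥ 2 ^ k`.
-/

open Set

section Partition

variable {S β : Type*}

def fiberPartition (g : S → β) : Set (Set S) :=
  (fun b => g ⁻¹' {b}) '' range g

lemma injOn_preimage_singleton_range (g : S → β) :
    InjOn (fun b => g ⁻¹' {b}) (range g) := by
  rintro _ ⟨m, rfl⟩ b _ h
  exact (congrArg (m ∈ ·) h).mp rfl

lemma isFinPartition_fiberPartition {g : S → β} (hg : (range g).Finite) :
    IsFinPartition (fiberPartition g) := by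
  refine ⟨hg.image _, ?_, ?_, ?_⟩
  · rintro ⟨_, ⟨m, rfl⟩, h⟩
    exact (congrArg (m ∈ ·) h).mp rfl
  · exact eq_univ_of_forall fun m => ⟨_, mem_image_of_mem _ (mem_range_self m), rfl⟩
  · rintro _ ⟨b, -, rfl⟩ _ ⟨b', -, rfl⟩ hne
    refine disjoint_left.mpr fun m hm hm' => hne ?_
    rw [show b = b' from hm.symm.trans hm']

lemma ncard_fiberPartition_meeting (g : S → β) (x : Set S) :
    {p ∈ fiberPartition g | (x ∩ p).Nonempty}.ncard = (g '' x).ncard := by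
  have : {p ∈ fiberPartition g | (x ∩ p).Nonempty} = (fun b => g ⁻¹' {b}) '' (g '' x) := by
    ext p
    constructor
    · rintro ⟨⟨_, -, rfl⟩, m, hmx, rfl⟩
      exact ⟨g m, mem_image_of_mem g hmx, rfl⟩
    · rintro ⟨_, ⟨m, hmx, rfl⟩, rfl⟩
      exact ⟨mem_image_of_mem _ (mem_range_self m), m, hmx, rfl⟩
  rw [this, ((injOn_preimage_singleton_range g).mono (image_subset_range g x)).ncard_image]

lemma IsLaverUltrafilter.exists_mem_ncard_image_le {U : Ultrafilter S}
    (hU : IsLaverUltrafilter U) (g : ℕ → S → β) (hg : ∀ n, (range (g n)).Finite) :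
    ∃ x ∈ U, ∀ n, (g n '' x).ncard ≤ n + 1 := by
  obtain ⟨x, hx, hcard⟩ :=
    hU.2 (fun n => fiberPartition (g n)) fun n => isFinPartition_fiberPartition (hg n)
  exact ⟨x, hx, fun n => ncard_fiberPartition_meeting (g n) x ▸ hcard n⟩

end Partition

lemma exists_dyadic_block_enumeration {α : Type*} (T : ℕ → Set α) (hT : ∀ n, (T n).Finite)
    (hcard : ∀ n, (T n).ncard ≤ 2 ^ n) (d : ℕ → α) :
    ∃ σ : ℕ → α, (∀ i, σ i ∈ insert (d (Nat.log 2 i)) (T (Nat.log 2 i))) ∧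
      ∀ n, ∀ a ∈ T n, ∃ i, Nat.log 2 i = n ∧ σ i = a := by
  classical
  let l : ℕ → List α := fun n => (hT n).toFinset.toList
  have hlen : ∀ n, (l n).length ≤ 2 ^ n := fun n => by
    simpa [l, ← Set.ncard_eq_toFinset_card] using hcard n
  let σ : ℕ → α := fun i =>
    if h : i - 2 ^ Nat.log 2 i < (l (Nat.log 2 i)).length then
      (l (Nat.log 2 i))[i - 2 ^ Nat.log 2 i]
    else d (Nat.log 2 i)
  refine ⟨σ, fun i => ?_, fun n a ha => ?_⟩
  · by_cases h : i - 2 ^ Nat.log 2 i < (l (Nat.log 2 i)).length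
    · simp only [σ, dif_pos h]
      exact mem_insert_of_mem _
        ((hT _).mem_toFinset.mp (Finset.mem_toList.mp (List.getElem_mem h)))
    · simp [σ, dif_neg h]
  · obtain ⟨j, hj, rfl⟩ := List.mem_iff_getElem.mp (by simpa [l] using ha : a ∈ l n)
    have hlog : Nat.log 2 (2 ^ n + j) = n :=
      Nat.log_eq_of_pow_le_of_lt_pow (Nat.le_add_right _ _)
        (by have := hlen n; rw [pow_succ]; omega)
    refine ⟨2 ^ n + j, hlog, ?_⟩
    simp only [σ, hlog, Nat.add_sub_cancel_left, dif_pos hj]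

lemma pow_le_two_pow_log_mul {i k : ℕ} (hi : 2 ^ k ≤ i) :
    i ^ k ≤ 2 ^ ((Nat.log 2 i + 1) * Nat.log 2 i) := by
  have hk : k ≤ Nat.log 2 i := Nat.le_log_of_pow_le one_lt_two hi
  calc i ^ k ≤ (2 ^ (Nat.log 2 i + 1)) ^ k :=
        Nat.pow_le_pow_left (Nat.lt_pow_succ_log_self one_lt_two i).le k
    _ = 2 ^ ((Nat.log 2 i + 1) * k) := by rw [← pow_mul]
    _ ≤ 2 ^ ((Nat.log 2 i + 1) * Nat.log 2 i) :=
        Nat.pow_le_pow_right two_pos (Nat.mul_le_mul_left _ hk)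

lemma ll_of_le_comp_log {f g : ℕ → ℕ} (hf : Monotone f)
    (hg : ∀ i, f (2 ^ ((Nat.log 2 i + 1) * Nat.log 2 i)) ≤ g i) : ll f g := fun k =>
  Filter.eventually_atTop.mpr ⟨2 ^ k, fun _ hi => (hf (pow_le_two_pow_log_mul hi)).trans (hg _)⟩

section Cantor

def prefixOf (y : ℕ → Bool) (L : ℕ) : List Bool :=
  List.ofFn fun i : Fin L => y i

@[simp]
lemma length_prefixOf (y : ℕ → Bool) (L : ℕ) : (prefixOf y L).length = L :=
  List.length_ofFn

lemma finite_range_prefixOf {ι : Type*} (F : ι → ℕ → Bool) (L : ℕ) :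
    (range fun m => prefixOf (F m) L).Finite :=
  (List.finite_length_eq Bool L).subset (by rintro _ ⟨m, rfl⟩; exact length_prefixOf _ _)

lemma mem_cylinder_prefixOf {y z : ℕ → Bool} {L : ℕ} :
    z ∈ cylinder (prefixOf y L) ↔ ∀ i < L, z i = y i := by
  simp [cylinder, prefixOf, Fin.forall_iff]

lemma isOpen_cylinder (s : List Bool) : IsOpen (cylinder s) := by
  rw [cylinder, ofPred_forall]
  exact isOpen_iInter_of_finite fun i =>
    ((isOpen_discrete {s.get i}).preimage (continuous_apply (i : ℕ)) :
      IsOpen ((fun x : ℕ → Bool => x i) ⁻¹' {s.get i}))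

lemma prefixOf_mem_image_of_mem_closure {A : Set (ℕ → Bool)} {y : ℕ → Bool}
    (hy : y ∈ closure A) (L : ℕ) : prefixOf y L ∈ (prefixOf · L) '' A := by
  obtain ⟨z, hz, hzA⟩ := mem_closure_iff.mp hy _ (isOpen_cylinder (prefixOf y L))
    (mem_cylinder_prefixOf.mpr fun _ _ => rfl)
  refine ⟨z, hzA, ?_⟩
  simp only [prefixOf, List.ofFn_inj]
  exact funext fun i => mem_cylinder_prefixOf.mp hz i i.2

lemma mem_limsupCyl {σ : ℕ → List Bool} {y : ℕ → Bool} :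
    y ∈ limsupCyl σ ↔ ∀ N, ∃ m ≥ N, y ∈ cylinder (σ m) := by
  simp [limsupCyl]

end Cantor

theorem stmt_9 (U : Ultrafilter ℕ) (hU : IsLaverUltrafilter U)
    (f : ℕ → ℕ) (hf : StrictMono f) (F : ℕ → (ℕ → Bool)) :
    ∃ x ∈ U, closure (F '' x) ∈ Yorioka f := by
  let L : ℕ → ℕ := fun n => f (2 ^ ((n + 1) * n))
  let seg : ℕ → ℕ → List Bool := fun n m => prefixOf (F m) (L n)
  have hseg_fin : ∀ n, (range (seg n)).Finite := fun n => finite_range_prefixOf F (L n)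
  obtain ⟨x, hx, hcard⟩ := hU.exists_mem_ncard_image_le seg hseg_fin
  obtain ⟨σ, hσ_mem, hσ_surj⟩ := exists_dyadic_block_enumeration (fun n => seg n '' x)
    (fun n => (hseg_fin n).subset (image_subset_range _ x))
    (fun n => (hcard n).trans Nat.lt_two_pow_self) (fun n => List.replicate (L n) false)
  have hσ_len : ∀ i, (σ i).length = L (Nat.log 2 i) := fun i => by
    rcases hσ_mem i with h | ⟨m, -, h⟩
    · rw [h, List.length_replicate]
    · rw [← h, length_prefixOf]
  refine ⟨x, hx, ?_⟩
  rw [Yorioka, mem_ofPred_eq]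
  refine ⟨σ, fun y hy => mem_limsupCyl.mpr fun N => ?_,
    ll_of_le_comp_log hf.monotone fun i => (hσ_len i).ge⟩
  have hyN : prefixOf y (L N) ∈ seg N '' x := by
    simpa only [image_image] using prefixOf_mem_image_of_mem_closure hy (L N)
  obtain ⟨i, hi, hσi⟩ := hσ_surj N _ hyN
  exact ⟨i, hi ▸ Nat.log_le_self 2 i, hσi ▸ mem_cylinder_prefixOf.mpr fun _ _ => rfl⟩
end

section
/- If U is a Laver ultrafilter on ℕ, then U is a measure zero ultrafilter and a nowhere dense ultrafilter: for every function F : ℕ → 2^ω there exists x ∈ U such that the topological closure of F[x] in 2^ω has measure zero with respect to the fair-coin product probability measure on 2^ω and, in particular, there exists x ∈ U such that the closure of F[x] is nowhere dense (has empty interior). -/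
/-- `μ` is the fair-coin product probability measure on `2^ω`: it is a probability
measure giving each basic clopen set `[s]` measure `2^{-|s|}`. -/
def IsFairCoinMeasure (μ : MeasureTheory.Measure (ℕ → Bool)) : Prop :=
  MeasureTheory.IsProbabilityMeasure μ ∧
  ∀ s : List Bool, μ (cylinder s) = (2 : ENNReal)⁻¹ ^ s.length

/-!
Partition `ℕ` at level `n` according to the first `2n` bits of `F k`. The Laver property gives
`x ∈ U` meeting at most `n + 1` pieces at every level, so the closure of `F[x]` is covered by
`n + 1` cylinders of length `2n`, of total measure at most `(n + 1) 4⁻ⁿ ≤ 2⁻ⁿ`. A null set has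
empty interior because every nonempty open set contains a cylinder, which has positive measure.
-/

open scoped ENNReal

def truncate (m : ℕ) (z : ℕ → Bool) : Fin m → Bool := fun i => z i

lemma continuous_truncate (m : ℕ) : Continuous (truncate m) :=
  continuous_pi fun i => continuous_apply (i : ℕ)

lemma cylinder_ofFn {m : ℕ} (s : Fin m → Bool) :
    cylinder (List.ofFn s) = truncate m ⁻¹' {s} := by
  ext z
  simp only [cylinder, Set.mem_ofPred_eq, Set.mem_preimage, Set.mem_singleton_iff, funext_iff,
    truncate, List.get_ofFn]
  exact (Fin.castOrderIso List.length_ofFn).forall_congr_right (q := fun i : Fin m => z i = s i)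

lemma preimage_truncate_self (y : ℕ → Bool) (m : ℕ) :
    truncate m ⁻¹' {truncate m y} = PiNat.cylinder y m := by
  ext z
  simp [truncate, funext_iff, PiNat.mem_cylinder_iff, Fin.forall_iff]

lemma ENNReal.natCast_succ_mul_inv_two_pow_two_mul_le (n : ℕ) :
    ((n + 1 : ℕ) : ℝ≥0∞) * 2⁻¹ ^ (2 * n) ≤ 2⁻¹ ^ n := by
  have hsucc : ((n + 1 : ℕ) : ℝ≥0∞) ≤ (2⁻¹ ^ n)⁻¹ := by
    rw [ENNReal.inv_pow, inv_inv]
    exact_mod_cast Nat.lt_two_pow_self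
  calc ((n + 1 : ℕ) : ℝ≥0∞) * 2⁻¹ ^ (2 * n) = ((n + 1 : ℕ) : ℝ≥0∞) * 2⁻¹ ^ n * 2⁻¹ ^ n := by
        rw [two_mul, pow_add, mul_assoc]
    _ ≤ 1 * 2⁻¹ ^ n := by gcongr; exact ENNReal.le_inv_iff_mul_le.1 hsucc
    _ = 2⁻¹ ^ n := one_mul _

namespace IsFairCoinMeasure

variable {μ : MeasureTheory.Measure (ℕ → Bool)} (hμ : IsFairCoinMeasure μ)
include hμ

lemma measure_preimage_truncate_singleton {m : ℕ} (s : Fin m → Bool) :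
    μ (truncate m ⁻¹' {s}) = 2⁻¹ ^ m := by
  rw [← cylinder_ofFn, hμ.2, List.length_ofFn]

lemma measure_closure_le (A : Set (ℕ → Bool)) (m : ℕ) :
    μ (closure A) ≤ (truncate m '' A).ncard * 2⁻¹ ^ m := by
  set T := truncate m '' A
  have hT : T.Finite := Set.toFinite T
  have hclosure : closure A ⊆ ⋃ s ∈ hT.toFinset, truncate m ⁻¹' {s} := by
    simp only [Set.Finite.mem_toFinset, Set.biUnion_preimage_singleton]
    exact closure_minimal (Set.subset_preimage_image _ _)
      ((isClosed_discrete T).preimage (continuous_truncate m))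
  calc μ (closure A) ≤ ∑ s ∈ hT.toFinset, μ (truncate m ⁻¹' {s}) :=
        (MeasureTheory.measure_mono hclosure).trans (MeasureTheory.measure_biUnion_finset_le _ _)
    _ = T.ncard * 2⁻¹ ^ m := by
        simp only [hμ.measure_preimage_truncate_singleton, Finset.sum_const, nsmul_eq_mul,
          Set.ncard_eq_toFinset_card T hT]

lemma measure_piNatCylinder (y : ℕ → Bool) (m : ℕ) : μ (PiNat.cylinder y m) = 2⁻¹ ^ m := by
  rw [← preimage_truncate_self, hμ.measure_preimage_truncate_singleton]

lemma interior_eq_empty_of_measure_eq_zero {s : Set (ℕ → Bool)} (hs : μ s = 0) :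
    interior s = ∅ := by
  refine Set.eq_empty_of_forall_notMem fun y hy => ?_
  obtain ⟨-, ⟨x, m, rfl⟩, -, hsub⟩ :=
    (PiNat.isTopologicalBasis_cylinders fun _ => Bool).exists_subset_of_mem_open hy isOpen_interior
  have hpos : μ (PiNat.cylinder x m) ≠ 0 := by
    simp [hμ.measure_piNatCylinder]
  exact hpos (MeasureTheory.measure_mono_null (hsub.trans interior_subset) hs)

lemma measure_closure_eq_zero {A : Set (ℕ → Bool)}
    (hA : ∀ n, (truncate (2 * n) '' A).ncard ≤ n + 1) : μ (closure A) = 0 := by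
  have hbound (n : ℕ) : μ (closure A) ≤ 2⁻¹ ^ n :=
    calc μ (closure A) ≤ (truncate (2 * n) '' A).ncard * 2⁻¹ ^ (2 * n) := hμ.measure_closure_le A _
      _ ≤ ((n + 1 : ℕ) : ℝ≥0∞) * 2⁻¹ ^ (2 * n) := by gcongr; exact hA n
      _ ≤ 2⁻¹ ^ n := ENNReal.natCast_succ_mul_inv_two_pow_two_mul_le n
  by_contra hne
  obtain ⟨n, hn⟩ := ENNReal.exists_inv_two_pow_lt hne
  exact (hbound n).not_gt hn

end IsFairCoinMeasure

lemma Setoid.isFinPartition_classes_ker {S α : Type*} [Finite α] (g : S → α) :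
    IsFinPartition (Setoid.ker g).classes :=
  ⟨Setoid.finite_classes_ker g, Setoid.empty_notMem_classes, Setoid.sUnion_classes _,
    (Setoid.isPartition_classes _).pairwiseDisjoint⟩

lemma Setoid.ncard_classes_ker_inter_nonempty {S α : Type*} (g : S → α) (x : Set S) :
    {p ∈ (Setoid.ker g).classes | (x ∩ p).Nonempty}.ncard = (g '' x).ncard := by
  have hfibers : {p ∈ (Setoid.ker g).classes | (x ∩ p).Nonempty} =
      (fun a => g ⁻¹' {a}) '' (g '' x) := by
    ext p
    simp only [Setoid.classes, Set.mem_image, Set.mem_ofPred_eq, exists_exists_and_eq_and]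
    constructor
    · rintro ⟨⟨l, rfl⟩, k, hkx, hkl⟩
      exact ⟨k, hkx, Set.ext fun j => hkl.symm ▸ Iff.rfl⟩
    · rintro ⟨k, hkx, rfl⟩
      exact ⟨⟨k, rfl⟩, k, hkx, rfl⟩
  rw [hfibers, Set.InjOn.ncard_image]
  rintro - ⟨k, -, rfl⟩ - ⟨l, -, rfl⟩ hkl
  exact (Set.ext_iff.1 hkl k).1 rfl

theorem IsLaverUltrafilter.exists_ncard_image_le {S : Type*} {U : Ultrafilter S}
    (hU : IsLaverUltrafilter U) {α : ℕ → Type*} [∀ n, Finite (α n)] (g : ∀ n, S → α n) :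
    ∃ x ∈ U, ∀ n, (g n '' x).ncard ≤ n + 1 := by
  obtain ⟨x, hxU, hx⟩ := hU.2 _ fun n => Setoid.isFinPartition_classes_ker (g n)
  exact ⟨x, hxU, fun n => Setoid.ncard_classes_ker_inter_nonempty (g n) x ▸ hx n⟩

theorem stmt_10 (U : Ultrafilter ℕ) (hU : IsLaverUltrafilter U)
    (μ : MeasureTheory.Measure (ℕ → Bool)) (hμ : IsFairCoinMeasure μ)
    (F : ℕ → (ℕ → Bool)) :
    (∃ x ∈ U, μ (closure (F '' x)) = 0) ∧
    (∃ x ∈ U, IsNowhereDense (closure (F '' x))) := by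
  obtain ⟨x, hxU, hx⟩ := hU.exists_ncard_image_le fun n => truncate (2 * n) ∘ F
  have hnull : μ (closure (F '' x)) = 0 :=
    hμ.measure_closure_eq_zero fun n => Set.image_comp (truncate (2 * n)) F x ▸ hx n
  exact ⟨⟨x, hxU, hnull⟩, x, hxU,
    isClosed_closure.isNowhereDense_iff.2 (hμ.interior_eq_empty_of_measure_eq_zero hnull)⟩
end

section
/- Let X ⊆ 2^ω be countable. Then there exists an injection φ : X → ℚ such that for all distinct x, y ∈ X, split(φ(x), φ(y)) = split(x, y). -/
/-- `ℚ ⊆ 2^ω`: the set of eventually-zero binary sequences. -/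
def QSet : Set (ℕ → Bool) := {x | ∀ᶠ n in Filter.atTop, x n = false}

/-- The least coordinate at which `x` and `y` differ. -/
noncomputable def splitPt (x y : ℕ → Bool) : ℕ := sInf {n | x n ≠ y n}

/-!
Measure closeness of two sequences by the length of their common prefix, with value `⊤` for
equal sequences; this is an ultrametric "depth", and the theorem asks for a depth-preserving map
from `X` into `ℚ`. Enumerate `X` as `f 0, f 1, …` and choose the images one at a time. To place
`y = f k`, take an earlier point `x` sharing the longest prefix with `y`, say of length `t`, and
map `y` to the eventually-zero sequence that follows the image of `x` below `t` and branches off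
it at `t`. Every other earlier point `z` shares a prefix of length at most `t` with `y`; if it is
shorter, the isosceles property of ultrametrics settles the depth, and if it equals `t`, then `x`
and `z` both differ from `y` at `t`, so, the alphabet being binary, `x` and `z` (hence their
images) agree through position `t`, and the new image branches off both at `t`.
-/

open Filter

section CommonPrefix

variable {α : Type*}

noncomputable def commonPrefixLen (x y : ℕ → α) : ℕ∞ :=
  ⨅ (i : ℕ) (_ : x i ≠ y i), (i : ℕ∞)

theorem natCast_le_commonPrefixLen_iff {x y : ℕ → α} {n : ℕ} :
    (n : ℕ∞) ≤ commonPrefixLen x y ↔ ∀ i < n, x i = y i := by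
  simp only [commonPrefixLen, le_iInf_iff, Nat.cast_le]
  exact forall_congr' fun i => by rw [← not_lt, not_imp_not]

theorem commonPrefixLen_comm (x y : ℕ → α) : commonPrefixLen x y = commonPrefixLen y x := by
  simp only [commonPrefixLen, ne_comm]

theorem commonPrefixLen_eq_top_iff {x y : ℕ → α} : commonPrefixLen x y = ⊤ ↔ x = y := by
  simp [commonPrefixLen, funext_iff]

theorem commonPrefixLen_eq_splitPt {x y : ℕ → Bool} (h : x ≠ y) :
    commonPrefixLen x y = splitPt x y := by
  rw [splitPt, ENat.natCast_sInf (s := {n | x n ≠ y n}) (Function.ne_iff.mp h)]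
  rfl

theorem commonPrefixLen_eq_natCast_iff {x y : ℕ → α} {n : ℕ} :
    commonPrefixLen x y = n ↔ (∀ i < n, x i = y i) ∧ x n ≠ y n := by
  rw [le_antisymm_iff, ← ENat.lt_add_one_iff (ENat.natCast_ne_top n), ← not_le, ← Nat.cast_add_one,
    natCast_le_commonPrefixLen_iff, natCast_le_commonPrefixLen_iff, Nat.forall_lt_succ_right]
  tauto

theorem min_commonPrefixLen_le (x y z : ℕ → α) :
    min (commonPrefixLen x y) (commonPrefixLen y z) ≤ commonPrefixLen x z := by
  refine ENat.forall_natCast_le_iff_le.mp fun n hn => ?_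
  rw [le_min_iff, natCast_le_commonPrefixLen_iff, natCast_le_commonPrefixLen_iff] at hn
  exact natCast_le_commonPrefixLen_iff.mpr fun i hi => (hn.1 i hi).trans (hn.2 i hi)

theorem commonPrefixLen_eq_of_lt {x y z : ℕ → α}
    (h : commonPrefixLen x y < commonPrefixLen x z) :
    commonPrefixLen y z = commonPrefixLen x y := by
  refine le_antisymm (not_lt.mp fun hlt => ?_) ?_
  · have := min_commonPrefixLen_le x z y
    rw [commonPrefixLen_comm z y] at this
    exact (lt_min h hlt).not_ge this
  · have := min_commonPrefixLen_le y x z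
    rwa [commonPrefixLen_comm y x, min_eq_left h.le] at this

end CommonPrefix

theorem natCast_lt_commonPrefixLen_of_eq {x y z : ℕ → Bool} {n : ℕ}
    (hy : commonPrefixLen x y = n) (hz : commonPrefixLen x z = n) :
    (n : ℕ∞) < commonPrefixLen y z := by
  rw [← ENat.add_one_le_iff (ENat.natCast_ne_top n), ← Nat.cast_add_one,
    natCast_le_commonPrefixLen_iff, Nat.forall_lt_succ_right]
  rw [commonPrefixLen_eq_natCast_iff] at hy hz
  refine ⟨fun i hi => (hy.1 i hi).symm.trans (hz.1 i hi), ?_⟩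
  revert hy hz
  cases x n <;> cases y n <;> cases z n <;> simp

def branchAt (x : ℕ → Bool) (t n : ℕ) : Bool :=
  if n < t then x n else if n = t then !x t else false

theorem branchAt_mem_QSet (x : ℕ → Bool) (t : ℕ) : branchAt x t ∈ QSet :=
  eventually_atTop.mpr ⟨t + 1, fun n hn => by simp [branchAt, show ¬n < t by omega,
    show n ≠ t by omega]⟩

theorem commonPrefixLen_branchAt (x : ℕ → Bool) (t : ℕ) :
    commonPrefixLen (branchAt x t) x = t :=
  commonPrefixLen_eq_natCast_iff.mpr ⟨fun _ hi => if_pos hi, by simp [branchAt]⟩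

theorem exists_mem_QSet_commonPrefixLen_eq {ι : Type*} (s : Finset ι) (x q : ι → ℕ → Bool)
    (hq : ∀ i ∈ s, q i ∈ QSet)
    (hiso : ∀ i ∈ s, ∀ j ∈ s, commonPrefixLen (q i) (q j) = commonPrefixLen (x i) (x j))
    (y : ℕ → Bool) :
    ∃ r ∈ QSet, ∀ i ∈ s, commonPrefixLen r (q i) = commonPrefixLen y (x i) := by
  rcases s.eq_empty_or_nonempty with rfl | hs
  · exact ⟨fun _ => false, Eventually.of_forall fun _ => rfl, by simp⟩
  obtain ⟨j, hj, hmax⟩ := s.exists_max_image (fun i => commonPrefixLen y (x i)) hs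
  by_cases htop : commonPrefixLen y (x j) = ⊤
  · obtain rfl := commonPrefixLen_eq_top_iff.mp htop
    exact ⟨q j, hq j hj, fun i hi => hiso j hj i hi⟩
  obtain ⟨t, ht⟩ := ENat.ne_top_iff_exists.mp htop
  have hrj : commonPrefixLen (q j) (branchAt (q j) t) = t := by
    rw [commonPrefixLen_comm, commonPrefixLen_branchAt]
  refine ⟨branchAt (q j) t, branchAt_mem_QSet _ _, fun i hi => ?_⟩
  rw [commonPrefixLen_comm]
  rcases (hmax i hi).lt_or_eq with hlt | heq
  · have hji : commonPrefixLen (q j) (q i) = commonPrefixLen y (x i) := by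
      rw [hiso j hj i hi, commonPrefixLen_comm, commonPrefixLen_eq_of_lt hlt]
    rw [commonPrefixLen_eq_of_lt (by rwa [hji, hrj, ht]), hji]
  · have hji : (t : ℕ∞) < commonPrefixLen (q j) (q i) := by
      rw [hiso j hj i hi]
      exact natCast_lt_commonPrefixLen_of_eq ht.symm (heq.trans ht.symm)
    rw [← commonPrefixLen_comm, commonPrefixLen_eq_of_lt (hrj ▸ hji), hrj, heq, ht]

noncomputable def isoSeq (f : ℕ → ℕ → Bool) (k : ℕ) : ℕ → Bool :=
  Classical.epsilon fun r =>
    r ∈ QSet ∧ ∀ i < k, commonPrefixLen r (isoSeq f i) = commonPrefixLen (f k) (f i)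
termination_by k

theorem commonPrefixLen_eq_of_forall_lt {f g : ℕ → ℕ → Bool} {k : ℕ}
    (h : ∀ j < k, ∀ i < j, commonPrefixLen (g j) (g i) = commonPrefixLen (f j) (f i)) :
    ∀ i < k, ∀ j < k, commonPrefixLen (g i) (g j) = commonPrefixLen (f i) (f j) := by
  intro i hi j hj
  rcases lt_trichotomy i j with hij | rfl | hji
  · rw [commonPrefixLen_comm, h j hj i hij, commonPrefixLen_comm]
  · rw [commonPrefixLen_eq_top_iff.mpr rfl, commonPrefixLen_eq_top_iff.mpr rfl]
  · exact h i hi j hji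

theorem isoSeq_spec (f : ℕ → ℕ → Bool) (k : ℕ) :
    isoSeq f k ∈ QSet ∧
      ∀ i < k, commonPrefixLen (isoSeq f k) (isoSeq f i) = commonPrefixLen (f k) (f i) := by
  induction k using Nat.strong_induction_on with
  | _ k ih =>
    obtain ⟨r, hr, hiso⟩ := exists_mem_QSet_commonPrefixLen_eq (Finset.range k) f (isoSeq f)
      (by simpa using fun i hi => (ih i hi).1)
      (by simpa using commonPrefixLen_eq_of_forall_lt fun j hj => (ih j hj).2) (f k)
    rw [isoSeq]
    exact Classical.epsilon_spec (p := fun r => r ∈ QSet ∧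
      ∀ i < k, commonPrefixLen r (isoSeq f i) = commonPrefixLen (f k) (f i))
      ⟨r, hr, by simpa using hiso⟩

theorem commonPrefixLen_isoSeq (f : ℕ → ℕ → Bool) (i j : ℕ) :
    commonPrefixLen (isoSeq f i) (isoSeq f j) = commonPrefixLen (f i) (f j) :=
  commonPrefixLen_eq_of_forall_lt (k := max i j + 1) (fun j _ => (isoSeq_spec f j).2)
    i (by omega) j (by omega)

theorem stmt_12 (X : Set (ℕ → Bool)) (hX : X.Countable) :
    ∃ φ : (ℕ → Bool) → (ℕ → Bool), Set.InjOn φ X ∧ (∀ x ∈ X, φ x ∈ QSet) ∧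
      ∀ x ∈ X, ∀ y ∈ X, x ≠ y → splitPt (φ x) (φ y) = splitPt x y := by
  obtain ⟨f, hXf⟩ := Set.countable_iff_exists_subset_range.mp hX
  set φ := isoSeq f ∘ Function.invFun f
  have hφ : ∀ x ∈ X, ∀ y ∈ X, commonPrefixLen (φ x) (φ y) = commonPrefixLen x y :=
    fun x hx y hy => by
      simp only [φ, Function.comp_apply, commonPrefixLen_isoSeq, Function.invFun_eq (hXf hx),
        Function.invFun_eq (hXf hy)]
  have hφ_ne : ∀ x ∈ X, ∀ y ∈ X, x ≠ y → φ x ≠ φ y := fun x hx y hy hxy => by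
    rwa [Ne, ← commonPrefixLen_eq_top_iff, hφ x hx y hy, commonPrefixLen_eq_top_iff]
  refine ⟨φ, fun x hx y hy => not_imp_not.mp (hφ_ne x hx y hy), fun x _ => (isoSeq_spec f _).1,
    fun x hx y hy hxy => ?_⟩
  have := hφ x hx y hy
  rwa [commonPrefixLen_eq_splitPt hxy, commonPrefixLen_eq_splitPt (hφ_ne x hx y hy hxy),
    Nat.cast_inj] at this
end

section
/- Let f : ℕ → ℕ be non-decreasing and unbounded, and let U be a non-principal ultrafilter on ℕ. Then the following are equivalent: (i) for every F : ℕ → 2^ω there exists x ∈ U such that level_{F[x]}(n) ≤ f(n)+1 for all n; (ii) for every G : ℕ → ℚ there exists y ∈ U such that level_{G[y]}(n) ≤ f(n)+1 for all n. -/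
section Aux

variable (F : ℕ → (ℕ → Bool))

/-- The "twist bit" at level `n` for the branch through `x`: look at the least `k`
whose `F k` agrees with `x` below `n`, and use its `n`-th bit. Depends only on `x` below `n`. -/
noncomputable def eps (n : ℕ) (x : ℕ → Bool) : Bool :=
  F (sInf {k | ∀ i < n, F k i = x i}) n

/-- The level-preserving "tree automorphism" twisting by `eps`. -/
noncomputable def sig (x : ℕ → Bool) : ℕ → Bool :=
  fun n => xor (x n) (eps F n x)

lemma eps_congr {n : ℕ} {a b : ℕ → Bool} (h : ∀ i < n, a i = b i) :
    eps F n a = eps F n b := by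
  unfold eps
  have : {k | ∀ i < n, F k i = a i} = {k | ∀ i < n, F k i = b i} := by
    ext k
    constructor <;> intro hk i hi
    · rw [hk i hi, h i hi]
    · rw [hk i hi, h i hi]
  rw [this]

lemma sig_agree_of_agree {n : ℕ} {a b : ℕ → Bool} (h : ∀ i < n, a i = b i) :
    ∀ i < n, sig F a i = sig F b i := by
  intro i hi
  unfold sig
  rw [h i hi, eps_congr F (fun j hj => h j (hj.trans hi))]

lemma agree_of_sig_agree {n : ℕ} {a b : ℕ → Bool}
    (h : ∀ i < n, sig F a i = sig F b i) : ∀ i < n, a i = b i := by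
  intro i hi
  induction i using Nat.strong_induction_on with
  | _ i ih =>
    have hagree : ∀ j < i, a j = b j := fun j hj => ih j hj (hj.trans hi)
    have he : eps F i a = eps F i b := eps_congr F hagree
    have hx := h i hi
    unfold sig at hx
    rw [he] at hx
    rcases Bool.eq_false_or_eq_true (eps F i b) with h0 | h0 <;>
      rw [h0] at hx <;> simpa using hx

/-- `sig F` preserves all levels. -/
lemma level_sig (A : Set (ℕ → Bool)) (n : ℕ) :
    level (sig F '' A) n = level A n := by
  classical
  unfold level
  set r : (ℕ → Bool) → (Fin n → Bool) := fun x => fun i : Fin n => x i with hr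
  -- extension of a finite string by `false`
  set ext : (Fin n → Bool) → (ℕ → Bool) :=
    fun v j => if h : j < n then v ⟨j, h⟩ else false with hext
  have hext_agree : ∀ v : Fin n → Bool, ∀ x : ℕ → Bool, r x = v →
      ∀ i < n, ext v i = x i := by
    intro v x hv i hi
    simp only [hext, dif_pos hi, ← hv, hr]
  set T : (Fin n → Bool) → (Fin n → Bool) := fun v => r (sig F (ext v)) with hT
  have key : ∀ x : ℕ → Bool, T (r x) = r (sig F x) := by
    intro x
    have hag : ∀ i < n, ext (r x) i = x i := hext_agree (r x) x rfl
    have := sig_agree_of_agree F hag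
    funext i
    simp only [hT, hr]
    exact this i i.2
  have himg : r '' (sig F '' A) = T '' (r '' A) := by
    rw [← Set.image_comp, ← Set.image_comp]
    apply Set.image_congr
    intro x _
    exact (key x).symm
  have hTinj : Function.Injective T := by
    intro u v huv
    have hag : ∀ i < n, sig F (ext u) i = sig F (ext v) i := by
      intro i hi
      have := congrFun huv ⟨i, hi⟩
      simpa [hT, hr] using this
    have := agree_of_sig_agree F hag
    funext i
    have h1 := this i i.2
    simpa [hext, dif_pos i.2] using h1
  calc (r '' (sig F '' A)).ncard = (T '' (r '' A)).ncard := by rw [himg]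
    _ = (r '' A).ncard := Set.ncard_image_of_injective _ hTinj

/-- Each `sig F (F k)` is eventually zero. -/
lemma sig_mem_QSet (k : ℕ) : sig F (F k) ∈ QSet := by
  classical
  -- witness of disagreement for each k' with F k' ≠ F k
  have hw : ∀ k', F k' ≠ F k → ∃ i, F k' i ≠ F k i := fun k' h => Function.ne_iff.mp h
  set w : ℕ → ℕ := fun k' => if h : F k' ≠ F k then Nat.find (hw k' h) else 0 with hwdef
  set N : ℕ := (Finset.range (k + 1)).sup w + 1 with hN
  rw [QSet, Set.mem_setOf_eq, Filter.eventually_atTop]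
  refine ⟨N, fun n hn => ?_⟩
  have hne : k ∈ {k' | ∀ i < n, F k' i = F k i} := fun i _ => rfl
  have hnonempty : {k' | ∀ i < n, F k' i = F k i}.Nonempty := ⟨k, hne⟩
  set j : ℕ := sInf {k' | ∀ i < n, F k' i = F k i} with hj
  have hjk : j ≤ k := Nat.sInf_le hne
  have hjmem : ∀ i < n, F j i = F k i := Nat.sInf_mem hnonempty
  have hFeq : F j = F k := by
    by_contra hne'
    have hwit : F j (Nat.find (hw j hne')) ≠ F k (Nat.find (hw j hne')) :=
      Nat.find_spec (hw j hne')
    have hwj : w j = Nat.find (hw j hne') := by simp [hwdef, hne']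
    have hle : w j ≤ (Finset.range (k + 1)).sup w :=
      Finset.le_sup (Finset.mem_range.mpr (Nat.lt_succ_of_le hjk))
    have hlt : w j < n := lt_of_lt_of_le (Nat.lt_succ_of_le hle) hn
    rw [hwj] at hlt
    exact hwit (hjmem _ hlt)
  have heps : eps F n (F k) = F k n := by
    rw [eps, ← hj, hFeq]
  simp [sig, heps]

end Aux

theorem stmt_13 (f : ℕ → ℕ) (hmono : Monotone f) (hunb : ∀ m : ℕ, ∃ n, m ≤ f n)
    (U : Ultrafilter ℕ) (hU : Filter.cofinite ≤ (U : Filter ℕ)) :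
    (∀ F : ℕ → (ℕ → Bool), ∃ x ∈ U, ∀ n, level (F '' x) n ≤ f n + 1) ↔
    (∀ G : ℕ → (ℕ → Bool), (∀ n, G n ∈ QSet) →
      ∃ y ∈ U, ∀ n, level (G '' y) n ≤ f n + 1) := by
  constructor
  · intro h G _
    exact h G
  · intro h F
    obtain ⟨y, hy, hl⟩ := h (fun k => sig F (F k)) (fun k => sig_mem_QSet F k)
    refine ⟨y, hy, fun n => ?_⟩
    have himg : (fun k => sig F (F k)) '' y = sig F '' (F '' y) := by
      rw [← Set.image_comp]; rfl
    have := hl n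
    rw [himg, level_sig] at this
    exact this
end

section
/- For every f ∈ H, cov(ℳ) ≤ 𝔤𝔢(I_f), where cov(ℳ) is the least cardinality of a family of meagre subsets of 2^ω whose union is all of 2^ω, and 𝔤𝔢(I_f) is the least cardinality of a filter base ℱ of I_f-positive subsets of ℚ such that for every I ⊆ ℚ with I ∈ I_f there exists F ∈ ℱ with I ∩ F finite. Consequently cov(ℳ) ≤ 𝔤𝔢(Laver) := min{𝔤𝔢(I_f) : f ∈ H}. -/
/-- The ideal `I_f`, viewed as an ideal on the countable set `ℚ ⊆ 2^ω`. -/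
def idealIQ (f : ℕ → ℕ) : Set (Set (ℕ → Bool)) :=
  {A | A ⊆ QSet ∧ ∀ d : ℕ, 1 ≤ d → ∀ᶠ n in Filter.atTop, d * level A n ≤ f n}

/-- A filter base of subsets of `ℚ`. -/
def IsFilterBaseQ (F : Set (Set (ℕ → Bool))) : Prop :=
  F.Nonempty ∧ (∀ A ∈ F, A ⊆ QSet) ∧ ∀ A ∈ F, ∀ B ∈ F, ∃ C ∈ F, C ⊆ A ∩ B

/-- The generic existence number `𝔤𝔢(I_f)`: the least cardinality of a filter base of
`I_f`-positive subsets of `ℚ` almost disjoint from every member of `I_f`. -/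
noncomputable def geI (f : ℕ → ℕ) : Cardinal :=
  sInf {c : Cardinal | ∃ F : Set (Set (ℕ → Bool)), IsFilterBaseQ F ∧
    (∀ A ∈ F, A ∉ idealIQ f) ∧ (∀ I ∈ idealIQ f, ∃ A ∈ F, (I ∩ A).Finite) ∧
    Cardinal.mk F = c}

/-- `𝔤𝔢(Laver) := min {𝔤𝔢(I_f) : f ∈ H}`. -/
noncomputable def geLaver : Cardinal :=
  sInf {c : Cardinal | ∃ f : ℕ → ℕ, memH f ∧ geI f = c}

/-- `cov(ℳ)`: the least cardinality of a family of meagre subsets of `2^ω` covering `2^ω`. -/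
noncomputable def covMeagre : Cardinal :=
  sInf {c : Cardinal | ∃ S : Set (Set (ℕ → Bool)), (∀ A ∈ S, IsMeagre A) ∧
    ⋃₀ S = Set.univ ∧ Cardinal.mk S = c}

/-! A filter base `F` witnessing `𝔤𝔢(I_f)` consists of infinite sets and is directed, so by
compactness of `2^ω` there is a branch `y` such that every `A ∈ F` has infinitely many points in
every cylinder around `y`. Choose `nk` strictly increasing with `(k+1)(k+2) ≤ f (nk k)`. A point
`x ∈ 2^ω` codes, column by column, a sequence in `ℚ` whose `k`-th term follows `y` below level
`nk k`: at a level `n ∈ (nk K, nk (K+1)]` at most `K + 2` restrictions occur, so the coded set lies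
in `I_f` and is almost disjoint from some `A ∈ F`. For a fixed `A` this is a meagre property of
`x`, because generically some column codes a point of `A` with support beyond any given bound.
Hence `|F|` meagre sets cover `2^ω`. -/

open Filter Set Topology PiNat

lemma level_union_le (A B : Set (ℕ → Bool)) (n : ℕ) : level (A ∪ B) n ≤ level A n + level B n := by
  simp only [level, image_union]
  exact ncard_union_le _ _

lemma level_le_ncard {A : Set (ℕ → Bool)} (hA : A.Finite) (n : ℕ) : level A n ≤ A.ncard :=
  ncard_image_le hA

lemma level_QSet (n : ℕ) : level QSet n = 2 ^ n := by
  have himage : (fun x : ℕ → Bool => fun i : Fin n => x i) '' QSet = univ := by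
    refine eq_univ_of_forall fun s => ⟨fun i => if h : i < n then s ⟨i, h⟩ else false, ?_, ?_⟩
    · filter_upwards [eventually_ge_atTop n] with i hi
      simp [not_lt.2 hi]
    · simp
  simp [level, himage]

lemma level_range_le (q : ℕ → ℕ → Bool) {n K : ℕ} (hq : ∀ k ≥ K, ∀ i < n, q k i = q K i) :
    level (range q) n ≤ K + 1 := by
  set r : ℕ → Fin n → Bool := fun k i => q k i
  have hrange : range r ⊆ r '' Iic K := by
    rintro _ ⟨k, rfl⟩
    rcases le_total k K with hk | hk
    · exact ⟨k, hk, rfl⟩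
    · exact ⟨K, mem_Iic.2 le_rfl, funext fun i => (hq k hk i i.isLt).symm⟩
  calc level (range q) n = (range r).ncard := by rw [level, ← range_comp]; rfl
    _ ≤ (r '' Iic K).ncard := ncard_le_ncard hrange (toFinite _)
    _ ≤ (Iic K).ncard := ncard_image_le (finite_Iic K)
    _ = K + 1 := ncard_Iic_nat K

lemma memH.tendsto_atTop {f : ℕ → ℕ} (hf : memH f) : Tendsto f atTop atTop :=
  tendsto_atTop_atTop_of_monotone hf.1 hf.2.1

lemma memH_id : memH id :=
  ⟨monotone_id, fun m => ⟨m, le_rfl⟩, fun _ => le_rfl⟩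

lemma union_mem_idealIQ {f : ℕ → ℕ} {I J : Set (ℕ → Bool)} (hI : I ∈ idealIQ f)
    (hJ : J ∈ idealIQ f) : I ∪ J ∈ idealIQ f := by
  refine ⟨union_subset hI.1 hJ.1, fun d hd => ?_⟩
  filter_upwards [hI.2 (2 * d) (by omega), hJ.2 (2 * d) (by omega)] with n hIn hJn
  have := level_union_le I J n
  nlinarith

lemma finite_mem_idealIQ {f : ℕ → ℕ} (hf : Tendsto f atTop atTop) {A : Set (ℕ → Bool)}
    (hA : A.Finite) (hAQ : A ⊆ QSet) : A ∈ idealIQ f := by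
  refine ⟨hAQ, fun d _ => ?_⟩
  filter_upwards [hf.eventually_ge_atTop (d * A.ncard)] with n hn
  exact (Nat.mul_le_mul_left d (level_le_ncard hA n)).trans hn

lemma QSet_notMem_idealIQ {f : ℕ → ℕ} (hf : memH f) : QSet ∉ idealIQ f := by
  intro h
  obtain ⟨n, hn⟩ := (h.2 1 le_rfl).exists
  rw [level_QSet, one_mul] at hn
  exact (n.lt_two_pow_self.trans_le hn).not_ge (hf.2.2 n)

lemma QSet_diff_notMem_idealIQ {f : ℕ → ℕ} (hf : memH f) {I : Set (ℕ → Bool)}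
    (hI : I ∈ idealIQ f) : QSet \ I ∉ idealIQ f := fun h =>
  QSet_notMem_idealIQ hf (sdiff_union_of_subset hI.1 ▸ union_mem_idealIQ h hI)

lemma StrictMono.exists_lt_le_succ {φ : ℕ → ℕ} (hφ : StrictMono φ) {n : ℕ} (hn : φ 0 < n) :
    ∃ k, φ k < n ∧ n ≤ φ (k + 1) := by
  by_contra! h
  have hlt : ∀ k, φ k < n := fun k => Nat.rec hn (fun k hk => h k hk) k
  exact (hlt n).not_ge (hφ.id_le n)

lemma range_mem_idealIQ {f : ℕ → ℕ} (hf : Monotone f) {nk : ℕ → ℕ} (hnk : StrictMono nk)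
    (hbound : ∀ k, (k + 1) * (k + 2) ≤ f (nk k)) {y : ℕ → Bool} {q : ℕ → ℕ → Bool}
    (hQ : ∀ k, q k ∈ QSet) (hy : ∀ k, q k ∈ cylinder y (nk k)) : range q ∈ idealIQ f := by
  refine ⟨range_subset_iff.2 hQ, fun d _ => ?_⟩
  filter_upwards [eventually_gt_atTop (nk d)] with n hn
  obtain ⟨K, hKn, hnK⟩ := hnk.exists_lt_le_succ ((hnk.monotone (Nat.zero_le d)).trans_lt hn)
  have hdK : d ≤ K := Nat.lt_succ_iff.1 (hnk.lt_iff_lt.1 (hn.trans_le hnK))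
  have hlevel : level (range q) n ≤ K + 2 := by
    refine level_range_le q fun k hk i hi => ?_
    have hi' : i < nk k := hi.trans_le (hnK.trans (hnk.monotone hk))
    rw [hy k i hi', hy (K + 1) i (hi.trans_le hnK)]
  calc d * level (range q) n ≤ (K + 1) * (K + 2) := Nat.mul_le_mul (by omega) hlevel
    _ ≤ f n := (hbound K).trans (hf hKn.le)

lemma exists_forall_inter_infinite {X : Type*} [TopologicalSpace X] [CompactSpace X] [Nonempty X]
    {F : Set (Set X)} (hdir : DirectedOn (· ⊇ ·) F) (hinf : ∀ A ∈ F, A.Infinite) :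
    ∃ y, ∀ A ∈ F, ∀ U ∈ 𝓝 y, (A ∩ U).Infinite := by
  have : (⨅ A : F, cofinite ⊓ 𝓟 (A : Set X)).NeBot :=
    iInf_neBot_of_directed
      (fun A B => have ⟨C, hC, hCA, hCB⟩ := hdir A A.2 B B.2
        ⟨⟨C, hC⟩, inf_le_inf_left _ (principal_mono.2 hCA),
          inf_le_inf_left _ (principal_mono.2 hCB)⟩)
      fun A => (hinf A A.2).cofinite_inf_principal_neBot
  obtain ⟨y, hy⟩ := exists_clusterPt_of_compactSpace (⨅ A : F, cofinite ⊓ 𝓟 (A : Set X))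
  refine ⟨y, fun A hA U hU => cofinite_inf_principal_neBot_iff.1 ?_⟩
  refine (hy.mono (iInf_le _ ⟨A, hA⟩)).neBot.mono ?_
  rw [← inf_principal]
  exact le_inf (inf_le_right.trans inf_le_left)
    (le_inf (inf_le_right.trans inf_le_right) (inf_le_left.trans (le_principal_iff.2 hU)))

def block {α : Type*} (x : ℕ → α) (k : ℕ) : ℕ → α := fun j => x (Nat.pair k j)

lemma continuous_block {α : Type*} [TopologicalSpace α] (k : ℕ) :
    Continuous fun x : ℕ → α => block x k :=
  continuous_pi fun _ => continuous_apply _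

lemma exists_mem_cylinder_block_eq {α : Type*} (x : ℕ → α) (n : ℕ) (b : ℕ → α) :
    ∃ x' ∈ cylinder x n, block x' n = b := by
  refine ⟨fun c => if (Nat.unpair c).1 = n then b (Nat.unpair c).2 else x c, fun i hi => ?_, ?_⟩
  · simp [((Nat.unpair_left_le i).trans_lt hi).ne]
  · funext j
    simp [block]

lemma setOf_exists_block_mem_mem_residual {α : Type*} [TopologicalSpace α] [DiscreteTopology α]
    {S : ℕ → Set (ℕ → α)} (hS : ∀ k, (interior (S k)).Nonempty) :
    {x : ℕ → α | ∃ k, block x k ∈ S k} ∈ residual (ℕ → α) := by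
  refine mem_of_superset (residual_of_dense_open (s := ⋃ k, (block · k) ⁻¹' interior (S k))
    (isOpen_iUnion fun k => isOpen_interior.preimage (continuous_block k)) ?_) ?_
  · rw [(isTopologicalBasis_cylinders fun _ => α).dense_iff]
    rintro _ ⟨x, n, rfl⟩ -
    obtain ⟨x', hx', hblock⟩ := exists_mem_cylinder_block_eq x n (hS n).some
    exact ⟨x', hx', mem_iUnion.2 ⟨n, by simpa [hblock] using (hS n).some_mem⟩⟩
  · simp only [iUnion_subset_iff]
    exact fun k x hx => ⟨k, interior_subset hx⟩

def vanishingFrom (m : ℕ) : Set (ℕ → Bool) := {q | ∀ i ≥ m, q i = false}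

lemma finite_vanishingFrom (m : ℕ) : (vanishingFrom m).Finite := by
  refine Finite.of_finite_image (f := fun q : ℕ → Bool => fun i : Fin m => q i) (toFinite _) ?_
  intro q hq q' hq' h
  funext i
  by_cases hi : i < m
  · exact congrFun h ⟨i, hi⟩
  · rw [hq i (not_lt.1 hi), hq' i (not_lt.1 hi)]

lemma QSet_eq_iUnion_vanishingFrom : QSet = ⋃ m, vanishingFrom m := by
  ext q
  simp [QSet, vanishingFrom, eventually_atTop]

lemma QSet_countable : QSet.Countable :=
  QSet_eq_iUnion_vanishingFrom ▸ countable_iUnion fun m => (finite_vanishingFrom m).countable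

lemma Set.Finite.exists_subset_vanishingFrom {S : Set (ℕ → Bool)} (hS : S.Finite)
    (hSQ : S ⊆ QSet) : ∃ m, S ⊆ vanishingFrom m := by
  obtain ⟨m, hm⟩ := eventually_atTop.1 (hS.eventually_all.2 fun q hq => hSQ hq)
  exact ⟨m, fun q hq i hi => hm i hi q hq⟩

open scoped Classical in
noncomputable def firstHit {β : Type*} (e : ℕ → β) (b : ℕ → Bool) : β :=
  if h : ∃ j, b j = true then e (Nat.find h) else e 0

lemma firstHit_mem_range {β : Type*} (e : ℕ → β) (b : ℕ → Bool) : firstHit e b ∈ range e := by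
  unfold firstHit
  split <;> exact mem_range_self _

lemma firstHit_eq_of_mem_cylinder {β : Type*} (e : ℕ → β) {j : ℕ} {b : ℕ → Bool}
    (hb : b ∈ cylinder (fun i => decide (i = j)) (j + 1)) : firstHit e b = e j := by
  have hj : b j = true := by simpa using hb j j.lt_succ_self
  have hex : ∃ i, b i = true := ⟨j, hj⟩
  have hfind : Nat.find hex = j :=
    (Nat.find_eq_iff hex).2 ⟨hj, fun i hi => by simpa [hi.ne] using hb i (hi.trans j.lt_succ_self)⟩
  simp [firstHit, hex, hfind]

lemma interior_firstHit_preimage_nonempty {β : Type*} (e : ℕ → β) (j : ℕ) :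
    (interior (firstHit e ⁻¹' {e j})).Nonempty :=
  ⟨_, (isOpen_cylinder (fun _ => Bool) _ _).subset_interior_iff.2
    (fun _ hb => firstHit_eq_of_mem_cylinder e hb) (self_mem_cylinder (fun i => decide (i = j)) _)⟩

lemma piecewise_Iio_eq_of_mem_cylinder {y p : ℕ → Bool} {n : ℕ} (hp : p ∈ cylinder y n) :
    (Iio n).piecewise y p = p := by
  funext i
  by_cases hi : i < n
  · simp [hi, hp i hi]
  · simp [hi]

noncomputable def codedPoint (y : ℕ → Bool) (nk : ℕ → ℕ) (e : ℕ → ℕ → Bool) (x : ℕ → Bool)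
    (k : ℕ) : ℕ → Bool :=
  (Iio (nk k)).piecewise y (firstHit e (block x k))

lemma codedPoint_mem_QSet {y : ℕ → Bool} {nk : ℕ → ℕ} {e : ℕ → ℕ → Bool} (he : range e ⊆ QSet)
    (x : ℕ → Bool) (k : ℕ) : codedPoint y nk e x k ∈ QSet := by
  filter_upwards [he (firstHit_mem_range e (block x k)), eventually_ge_atTop (nk k)] with i hi hik
  simpa [codedPoint, not_lt.2 hik] using hi

lemma codedPoint_mem_cylinder (y : ℕ → Bool) (nk : ℕ → ℕ) (e : ℕ → ℕ → Bool) (x : ℕ → Bool)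
    (k : ℕ) : codedPoint y nk e x k ∈ cylinder y (nk k) :=
  fun _ hi => piecewise_eq_of_mem _ _ _ hi

lemma isMeagre_setOf_finite_range_codedPoint_inter {y : ℕ → Bool} {nk : ℕ → ℕ}
    {e : ℕ → ℕ → Bool} (he : range e = QSet) {A : Set (ℕ → Bool)} (hAQ : A ⊆ QSet)
    (hA : ∀ k, (A ∩ cylinder y (nk k)).Infinite) :
    IsMeagre {x | (range (codedPoint y nk e x) ∩ A).Finite} := by
  set S : ℕ → ℕ → Set (ℕ → Bool) :=
    fun m k => {b | (Iio (nk k)).piecewise y (firstHit e b) ∈ A \ vanishingFrom m}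
  have hS : ∀ m k, (interior (S m k)).Nonempty := by
    intro m k
    obtain ⟨p, ⟨hpA, hpy⟩, hpm⟩ := ((hA k).sdiff (finite_vanishingFrom m)).nonempty
    obtain ⟨j, rfl⟩ : p ∈ range e := he ▸ hAQ hpA
    refine (interior_firstHit_preimage_nonempty e j).mono (interior_mono fun b hb => ?_)
    rw [mem_preimage, mem_singleton_iff] at hb
    show (Iio (nk k)).piecewise y (firstHit e b) ∈ A \ vanishingFrom m
    rw [hb, piecewise_Iio_eq_of_mem_cylinder hpy]
    exact ⟨hpA, hpm⟩
  refine mem_of_superset (countable_iInter_mem.2 fun m =>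
    setOf_exists_block_mem_mem_residual (hS m)) fun x hx hfin => ?_
  obtain ⟨m, hm⟩ := hfin.exists_subset_vanishingFrom
    (inter_subset_left.trans (range_subset_iff.2 (codedPoint_mem_QSet he.subset x)))
  obtain ⟨k, hk⟩ := mem_iInter.1 hx m
  exact hk.2 (hm ⟨mem_range_self k, hk.1⟩)

lemma IsFilterBaseQ.directedOn {F : Set (Set (ℕ → Bool))} (hF : IsFilterBaseQ F) :
    DirectedOn (· ⊇ ·) F := fun A hA B hB =>
  (hF.2.2 A hA B hB).imp fun _ ⟨hC, hCAB⟩ =>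
    ⟨hC, hCAB.trans inter_subset_left, hCAB.trans inter_subset_right⟩

lemma covMeagre_le_mk {f : ℕ → ℕ} (hf : memH f) {F : Set (Set (ℕ → Bool))}
    (hF : IsFilterBaseQ F) (hpos : ∀ A ∈ F, A ∉ idealIQ f)
    (hgen : ∀ I ∈ idealIQ f, ∃ A ∈ F, (I ∩ A).Finite) : covMeagre ≤ Cardinal.mk F := by
  have hFQ := hF.2.1
  obtain ⟨y, hy⟩ := exists_forall_inter_infinite hF.directedOn
    fun A hA hfin => hpos A hA (finite_mem_idealIQ hf.tendsto_atTop hfin (hFQ A hA))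
  obtain ⟨nk, hnk, hbound⟩ := extraction_forall_of_eventually fun k =>
    hf.tendsto_atTop.eventually_ge_atTop ((k + 1) * (k + 2))
  obtain ⟨e, he⟩ :=
    QSet_countable.exists_eq_range ⟨fun _ => false, Eventually.of_forall fun _ => rfl⟩
  set M : Set (ℕ → Bool) → Set (ℕ → Bool) :=
    fun A => {x | (range (codedPoint y nk e x) ∩ A).Finite}
  have hmeagre : ∀ B ∈ M '' F, IsMeagre B := by
    rintro _ ⟨A, hA, rfl⟩
    exact isMeagre_setOf_finite_range_codedPoint_inter he.symm (hFQ A hA)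
      fun k => hy A hA _ ((isOpen_cylinder _ y (nk k)).mem_nhds (self_mem_cylinder y (nk k)))
  have hcover : ⋃₀ (M '' F) = univ := by
    refine eq_univ_of_forall fun x => ?_
    obtain ⟨A, hA, hfin⟩ := hgen _ (range_mem_idealIQ hf.1 hnk hbound
      (codedPoint_mem_QSet he.symm.subset x) (codedPoint_mem_cylinder y nk e x))
    exact ⟨M A, mem_image_of_mem M hA, hfin⟩
  calc covMeagre ≤ Cardinal.mk (M '' F) := csInf_le' ⟨M '' F, hmeagre, hcover, rfl⟩
    _ ≤ Cardinal.mk F := Cardinal.mk_image_le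

lemma exists_isFilterBaseQ_generic {f : ℕ → ℕ} (hf : memH f) :
    ∃ F, IsFilterBaseQ F ∧ (∀ A ∈ F, A ∉ idealIQ f) ∧
      ∀ I ∈ idealIQ f, ∃ A ∈ F, (I ∩ A).Finite := by
  refine ⟨(QSet \ ·) '' idealIQ f, ⟨⟨QSet \ ∅, ∅, finite_mem_idealIQ hf.tendsto_atTop finite_empty
    (empty_subset _), rfl⟩, ?_, ?_⟩, ?_, fun I hI => ⟨QSet \ I, mem_image_of_mem _ hI, ?_⟩⟩
  · rintro _ ⟨I, -, rfl⟩
    exact sdiff_subset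
  · rintro _ ⟨I, hI, rfl⟩ _ ⟨J, hJ, rfl⟩
    exact ⟨QSet \ (I ∪ J), mem_image_of_mem _ (union_mem_idealIQ hI hJ),
      subset_inter (sdiff_subset_sdiff_right subset_union_left)
        (sdiff_subset_sdiff_right subset_union_right)⟩
  · rintro _ ⟨I, hI, rfl⟩
    exact QSet_diff_notMem_idealIQ hf hI
  · simp

lemma covMeagre_le_geI (f : ℕ → ℕ) (hf : memH f) : covMeagre ≤ geI f := by
  obtain ⟨F, hF, hpos, hgen⟩ := exists_isFilterBaseQ_generic hf
  refine le_csInf ⟨_, F, hF, hpos, hgen, rfl⟩ ?_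
  rintro _ ⟨F, hF, hpos, hgen, rfl⟩
  exact covMeagre_le_mk hf hF hpos hgen

theorem stmt_14 :
    (∀ f : ℕ → ℕ, memH f → covMeagre ≤ geI f) ∧ covMeagre ≤ geLaver := by
  refine ⟨covMeagre_le_geI, le_csInf ⟨_, id, memH_id, rfl⟩ ?_⟩
  rintro _ ⟨f, hf, rfl⟩
  exact covMeagre_le_geI f hf
end
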